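/- arXiv:1304.2860 — 7 statements merged into one kernel-verified Lean document; each statement's English description precedes it below -/
import Mathlib

section
/- A stack configuration c is poppable if and only if: (1) stack H does not contain the pattern 132, (2) stack V does not contain the pattern 12, and (3) the pair of stacks (V,H) does not contain the pattern |2|13|. -/
/-- The three stack operations: `ρ` (push the next input element onto `H`),
`λ` (move the top of `H` onto the top of `V`), `μ` (pop the top of `V` to the output). -/
inductive Op : Type
  | push : Op
  | lam : Op
  | mu : Op
  deriving DecidableEq

/-- A full machine configuration: remaining input, stack `H`, stack `V`
(both stacks have their top at the head of the list), and the output so far. -/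
structure Conf : Type where
  input : List ℤ
  H : List ℤ
  V : List ℤ
  output : List ℤ
  deriving DecidableEq

/-- One machine step (`none` if the operation is impossible). -/
def stepOp : Op → Conf → Option Conf
  | Op.push, ⟨x :: inp, h, v, out⟩ => some ⟨inp, x :: h, v, out⟩
  | Op.lam, ⟨inp, x :: h, v, out⟩ => some ⟨inp, h, x :: v, out⟩
  | Op.mu, ⟨inp, h, x :: v, out⟩ => some ⟨inp, h, v, out ++ [x]⟩
  | _, _ => none

/-- Run a word of operations from a configuration. -/
def runOps : List Op → Conf → Option Conf
  | [], c => some c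
  | o :: w, c => (stepOp o c).bind (runOps w)

/-- Initial configuration with input `σ`, empty stacks and empty output. -/
def initConf (σ : List ℤ) : Conf := ⟨σ, [], [], []⟩

/-- Number of occurrences of the letter `o` in the word `w`. -/
def countOp (w : List Op) (o : Op) : ℕ := (w.filter (fun o' => decide (o' = o))).length

/-- A stack word: every prefix `v` satisfies `|v|_ρ ≥ |v|_λ ≥ |v|_μ`. -/
def IsStackWord (w : List Op) : Prop :=
  ∀ v : List Op, v <+: w →
    countOp v Op.mu ≤ countOp v Op.lam ∧ countOp v Op.lam ≤ countOp v Op.push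

/-- A sorting word: a stack word with `|w|_ρ = |w|_λ = |w|_μ`. -/
def IsSortingWord (w : List Op) : Prop :=
  IsStackWord w ∧ countOp w Op.push = countOp w Op.lam ∧ countOp w Op.lam = countOp w Op.mu

/-- `w` is a sorting word for `σ`: applied to input `σ` it empties everything
and outputs the elements of `σ` in increasing order. -/
def SortsTo (σ : List ℤ) (w : List Op) : Prop :=
  ∃ out : List ℤ, runOps w (initConf σ) = some ⟨[], [], [], out⟩ ∧
    out.Pairwise (· < ·) ∧ out.Perm σ

/-- `σ` is 2-stack sortable. -/
def Sortable (σ : List ℤ) : Prop := ∃ w : List Op, SortsTo σ w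

/-- A stack configuration `(V, H)`; each list has the top of the stack at its head
(so the bottom-to-top reading is the reverse of the list). -/
structure SConf : Type where
  V : List ℤ
  H : List ℤ
  deriving DecidableEq

/-- The elements of a stack configuration. -/
def SConf.elems (c : SConf) : List ℤ := c.V ++ c.H

/-- A stack configuration is poppable if its elements can all be output in
increasing order using only operations `λ` and `μ`. -/
def Poppable (c : SConf) : Prop :=
  ∃ (w : List Op) (out : List ℤ), Op.push ∉ w ∧
    runOps w ⟨[], c.H, c.V, []⟩ = some ⟨[], [], [], out⟩ ∧ out.Pairwise (· < ·)

/-- `c` is the stack configuration reached after performing `w` with input `σ`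
(i.e. `c = c_σ(w)`). -/
def ReachesConf (σ : List ℤ) (w : List Op) (c : SConf) : Prop :=
  ∃ inp out : List ℤ, runOps w (initConf σ) = some ⟨inp, c.H, c.V, out⟩

/-- A stack configuration is reachable for `σ` if it equals `c_σ(w)` for some stack word `w`. -/
def Reachable (σ : List ℤ) (c : SConf) : Prop :=
  ∃ w : List Op, IsStackWord w ∧ ReachesConf σ w c

/-- A total stack configuration of `σ`: its elements are exactly those of `σ`. -/
def TotalFor (σ : List ℤ) (c : SConf) : Prop := c.elems.Perm σ

/-- A pushall stack configuration of `σ`: poppable, total and reachable for `σ`. -/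
def IsPushall (σ : List ℤ) (c : SConf) : Prop :=
  Poppable c ∧ TotalFor σ c ∧ Reachable σ c

/-- The decorated word of `w` started from a configuration: each letter is labelled
with the element it acts on. -/
def decorate : List Op → Conf → Option (List (Op × ℤ))
  | [], _ => some []
  | Op.push :: w, ⟨x :: inp, h, v, out⟩ =>
      (decorate w ⟨inp, x :: h, v, out⟩).map (fun l => (Op.push, x) :: l)
  | Op.lam :: w, ⟨inp, x :: h, v, out⟩ =>
      (decorate w ⟨inp, h, x :: v, out⟩).map (fun l => (Op.lam, x) :: l)
  | Op.mu :: w, ⟨inp, h, x :: v, out⟩ =>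
      (decorate w ⟨inp, h, v, out ++ [x]⟩).map (fun l => (Op.mu, x) :: l)
  | _ :: _, _ => none

/-- The restriction `w_{|I}` of a decorated word: keep exactly the letters acting
on elements of `I`, then forget the labels. -/
def restrictWord (dw : List (Op × ℤ)) (I : Finset ℤ) : List Op :=
  (dw.filter (fun p => decide (p.2 ∈ I))).map Prod.fst

/-- `Bs` is a decomposition of `τ` into (nonempty, contiguous) blocks whose values
decrease from one block to the next. -/
def IsDecBlocks (τ : List ℤ) (Bs : List (List ℤ)) : Prop :=
  τ = Bs.flatten ∧ (∀ B ∈ Bs, B ≠ []) ∧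
    Bs.Pairwise (fun B B' => ∀ x ∈ B, ∀ y ∈ B', y < x)

/-- `τ` is `⊖`-indecomposable. -/
def MinusIndecomposable (τ : List ℤ) : Prop :=
  τ ≠ [] ∧ ∀ Bs : List (List ℤ), IsDecBlocks τ Bs → Bs.length ≤ 1

/-- `Bs` is the `⊖`-decomposition of `τ`: a decomposition into decreasing blocks,
each of which is `⊖`-indecomposable. -/
def IsMinusDecomposition (τ : List ℤ) (Bs : List (List ℤ)) : Prop :=
  IsDecBlocks τ Bs ∧ ∀ B ∈ Bs, MinusIndecomposable B

/-- `k` (0-based) is the position of a right-to-left minimum of `σ`: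
no later entry is smaller. -/
def IsRTLMinPos (σ : List ℤ) (k : ℕ) : Prop :=
  k < σ.length ∧ ∀ j, j < σ.length → k < j → ¬ (σ.getD j 0 < σ.getD k 0)

instance (σ : List ℤ) : DecidablePred (IsRTLMinPos σ) := fun k => by
  unfold IsRTLMinPos; infer_instance

/-- The (increasing) list of positions of the right-to-left minima of `σ`. -/
def rtlPositions (σ : List ℤ) : List ℕ :=
  (List.range σ.length).filter (fun k => decide (IsRTLMinPos σ k))

/-- The number `r` of right-to-left minima of `σ`. -/
def rtlCount (σ : List ℤ) : ℕ := (rtlPositions σ).length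

/-- The 0-based position `k_i` of the `i`-th right-to-left minimum of `σ` (`i` is 1-based). -/
def rtlPos (σ : List ℤ) (i : ℕ) : ℕ := (rtlPositions σ).getD (i - 1) 0

/-- `σ^{(i)}`: the elements `σ_j` with `j < k_i` and `σ_j > σ_{k_i}`, in the order of `σ`. -/
def sigmaUp (σ : List ℤ) (i : ℕ) : List ℤ :=
  (σ.take (rtlPos σ i)).filter (fun x => decide (σ.getD (rtlPos σ i) 0 < x))

/-- `A^{(i)}`: the elements `σ_j` with `j < k_i` and `σ_j > σ_{k_{i+1}}`, in the order of `σ`. -/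
def commonA (σ : List ℤ) (i : ℕ) : List ℤ :=
  (σ.take (rtlPos σ i)).filter (fun x => decide (σ.getD (rtlPos σ (i + 1)) 0 < x))

/-- The letter `u` occurs (strictly) before the letter `v` in the decorated word `dw`. -/
def Before (dw : List (Op × ℤ)) (u v : Op × ℤ) : Prop :=
  ∃ d1 d2 d3 : List (Op × ℤ), dw = d1 ++ u :: d2 ++ v :: d3

/-- The decorated word `dw` (of a sorting word of `σ`) satisfies property `(P_i)`
(`i` is 1-based). -/
def SatisfiesP (σ : List ℤ) (dw : List (Op × ℤ)) (i : ℕ) : Prop :=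
  (∃ d1 d2 : List (Op × ℤ),
      dw = d1 ++ (Op.push, σ.getD (rtlPos σ i) 0) :: (Op.lam, σ.getD (rtlPos σ i) 0)
        :: (Op.mu, σ.getD (rtlPos σ i) 0) :: d2) ∧
  (∀ x ∈ σ, x < σ.getD (rtlPos σ i) 0 →
      Before dw (Op.mu, x) (Op.push, σ.getD (rtlPos σ i) 0)) ∧
  (i < rtlCount σ →
    ∀ (Bs : List (List ℤ)) (p : ℕ) (m : ℤ),
      IsMinusDecomposition (sigmaUp σ i) Bs →
      m ∈ commonA σ i → (∀ y ∈ commonA σ i, m ≤ y) →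
      p < Bs.length → m ∈ Bs.getD p [] →
      ∀ (x : ℤ) (j : ℕ), p < j → j < Bs.length → x ∈ Bs.getD j [] →
        Before dw (Op.mu, x) (Op.push, σ.getD (rtlPos σ i + 1) 0))

/-- An extended stack configuration `(c, i)` of `σ`: here `i` is the number of input
elements already consumed (the paper's index minus one), `c` is poppable and consists
of all elements among the first `i` ones that are greater than some value `p`. -/
def IsExtConf (σ : List ℤ) (c : SConf) (i : ℕ) : Prop :=
  i ≤ σ.length ∧ Poppable c ∧ c.elems.Nodup ∧
    ∃ p : ℤ, ∀ x : ℤ, x ∈ c.elems ↔ (x ∈ σ.take i ∧ p < x)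

/-- `(c', j)` is accessible from `(c, i)` for `σ`: starting from stacks `c` with input
`σ_{i+1} … σ_n` remaining, some sequence of operations reaches stacks `c'` with input
`σ_{j+1} … σ_n` remaining, the `μ` operations outputting elements in increasing order. -/
def AccessibleFrom (σ : List ℤ) (c : SConf) (i : ℕ) (c' : SConf) (j : ℕ) : Prop :=
  ∃ (w : List Op) (out : List ℤ),
    runOps w ⟨σ.drop i, c.H, c.V, []⟩ = some ⟨σ.drop j, c'.H, c'.V, out⟩ ∧
    out.Pairwise (· < ·)

/-- A `P_i`-stack configuration of `σ`: a configuration `c_{σ_{≤k_i}}(w)` such that for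
some word `u` whose first letter is the push of `σ_{k_i}`, `w ++ u` is a sorting word of
`σ_{≤k_i}` satisfying `(P_ℓ)` for all `ℓ` from 1 to `i`. -/
def PiConfig (σ : List ℤ) (i : ℕ) (c : SConf) : Prop :=
  ∃ (w u : List Op) (dw : List (Op × ℤ)),
    u.head? = some Op.push ∧
    countOp w Op.push = rtlPos σ i ∧
    ReachesConf (σ.take (rtlPos σ i + 1)) w c ∧
    SortsTo (σ.take (rtlPos σ i + 1)) (w ++ u) ∧
    decorate (w ++ u) (initConf (σ.take (rtlPos σ i + 1))) = some dw ∧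
    ∀ l, 1 ≤ l → l ≤ i → SatisfiesP (σ.take (rtlPos σ i + 1)) dw l

/-- The restriction `c_{|I}` of a stack configuration to the elements of `I`. -/
def restrictConf (c : SConf) (I : List ℤ) : SConf :=
  ⟨c.V.filter (fun x => decide (x ∈ I)), c.H.filter (fun x => decide (x ∈ I))⟩

/-- The restriction `σ_{|I}` of a list to the elements of `I`. -/
def restrictList (τ I : List ℤ) : List ℤ := τ.filter (fun x => decide (x ∈ I))

/-- Stack `H` (top at head, i.e. bottom-to-top is the reverse) contains the pattern `132`. -/
def HasPattern132 (H : List ℤ) : Prop :=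
  ∃ x y z : ℤ, List.Sublist [x, y, z] H.reverse ∧ x < z ∧ z < y

/-- Stack `V` contains the pattern `12` (bottom to top). -/
def HasPattern12 (V : List ℤ) : Prop :=
  ∃ x y : ℤ, List.Sublist [x, y] V.reverse ∧ x < y

/-- The stacks `(V,H)` contain the pattern `|2|13|`: an element `i` of `V` and elements
`j, k` of `H`, with `j` below `k` in `H`, such that `j < i < k`. -/
def HasPattern2_13 (c : SConf) : Prop :=
  ∃ i ∈ c.V, ∃ j k : ℤ, List.Sublist [j, k] c.H.reverse ∧ j < i ∧ i < k

/-- `y` occurs (strictly) above `x` in the stack `L` (top of stack at the head). -/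
def AboveIn (L : List ℤ) (y x : ℤ) : Prop :=
  ∃ (a b : ℕ) (ha : a < L.length) (hb : b < L.length),
    a < b ∧ L.get ⟨a, ha⟩ = y ∧ L.get ⟨b, hb⟩ = x

/-- The increasing list of integers `i, i+1, …, j`. -/
def intRange (i j : ℤ) : List ℤ := (List.range (j + 1 - i).toNat).map (fun t => i + t)

/-- The decreasing permutation `n (n-1) … 2 1`. -/
def decPerm (n : ℕ) : List ℤ := (List.range n).map (fun t => (n - t : ℤ))

/-!
Necessity: reading a sorted popping run backwards, `λ` and `μ` never destroy the absence of the
three patterns, as long as everything already output is smaller than everything still stacked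
(which sortedness forces). Sufficiency: the greedy strategy works. If the smallest remaining
element lies in `V`, then it is the top of `V` (no `12`) and is popped. Otherwise it lies in `H`,
and moving the top `x` of `H` onto `V` creates no pattern: a `12` in `V` ending at `x` would,
with the minimum below `x` in `H`, form a `|2|13|`, and a `|2|13|` using `x` would be a `132`
ending at `x` in `H`.
-/

theorem List.pair_sublist_reverse_cons {α : Type*} {a b x : α} {l : List α} :
    List.Sublist [a, b] (x :: l).reverse ↔ List.Sublist [a, b] l.reverse ∨ a ∈ l ∧ b = x := by
  rw [← List.reverse_sublist, ← List.reverse_sublist (l₁ := [a, b])]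
  simp [List.sublist_cons_iff, and_comm]

theorem List.triple_sublist_reverse_cons {α : Type*} {a b c x : α} {l : List α} :
    List.Sublist [a, b, c] (x :: l).reverse ↔
      List.Sublist [a, b, c] l.reverse ∨ List.Sublist [a, b] l.reverse ∧ c = x := by
  rw [← List.reverse_sublist, ← List.reverse_sublist (l₁ := [a, b, c]),
    ← List.reverse_sublist (l₁ := [a, b])]
  simp [List.sublist_cons_iff, and_comm]

theorem le_of_not_hasPattern12_cons {V : List ℤ} {v y : ℤ} (h12 : ¬ HasPattern12 (v :: V))
    (hy : y ∈ V) : v ≤ y :=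
  not_lt.1 fun hlt => h12 ⟨y, v, List.pair_sublist_reverse_cons.2 (Or.inr ⟨hy, rfl⟩), hlt⟩

def AvoidsPatterns (c : SConf) : Prop :=
  ¬ HasPattern132 c.H ∧ ¬ HasPattern12 c.V ∧ ¬ HasPattern2_13 c

namespace AvoidsPatterns

variable {V H : List ℤ} {x : ℤ}

theorem nil : AvoidsPatterns ⟨[], []⟩ := by
  simp [AvoidsPatterns, HasPattern132, HasPattern12, HasPattern2_13]

theorem of_lam (h : AvoidsPatterns ⟨x :: V, H⟩) : AvoidsPatterns ⟨V, x :: H⟩ := by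
  obtain ⟨h132, h12, h213⟩ := h
  refine ⟨?_, fun ⟨a, b, hab, hlt⟩ => h12 ⟨a, b, hab.trans ?_, hlt⟩, ?_⟩
  · rintro ⟨a, b, c, habc, hac, hcb⟩
    rcases List.triple_sublist_reverse_cons.1 habc with habc | ⟨hab, rfl⟩
    · exact h132 ⟨a, b, c, habc, hac, hcb⟩
    · exact h213 ⟨c, List.mem_cons_self, a, b, hab, hac, hcb⟩
  · simp
  · rintro ⟨i, hi, j, k, hjk, hji, hik⟩
    rcases List.pair_sublist_reverse_cons.1 hjk with hjk | ⟨-, rfl⟩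
    · exact h213 ⟨i, List.mem_cons_of_mem _ hi, j, k, hjk, hji, hik⟩
    · exact h12 ⟨i, k, List.pair_sublist_reverse_cons.2 (Or.inr ⟨hi, rfl⟩), hik⟩

theorem of_mu (hx : ∀ b ∈ V ++ H, x < b) (h : AvoidsPatterns ⟨V, H⟩) :
    AvoidsPatterns ⟨x :: V, H⟩ := by
  obtain ⟨h132, h12, h213⟩ := h
  refine ⟨h132, ?_, ?_⟩
  · rintro ⟨a, b, hab, hlt⟩
    rcases List.pair_sublist_reverse_cons.1 hab with hab | ⟨ha, rfl⟩
    · exact h12 ⟨a, b, hab, hlt⟩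
    · exact (hx a (List.mem_append_left _ ha)).not_gt hlt
  · rintro ⟨i, hi, j, k, hjk, hji, hik⟩
    rcases List.mem_cons.1 hi with rfl | hi
    · have hj : j ∈ H := by simpa using hjk.subset (List.mem_cons_self)
      exact (hx j (List.mem_append_right _ hj)).not_gt hji
    · exact h213 ⟨i, hi, j, k, hjk, hji, hik⟩

theorem pop (h : AvoidsPatterns ⟨x :: V, H⟩) : AvoidsPatterns ⟨V, H⟩ := by
  obtain ⟨h132, h12, h213⟩ := h
  refine ⟨h132, fun ⟨a, b, hab, hlt⟩ => h12 ⟨a, b, ?_, hlt⟩,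
    fun ⟨i, hi, hrest⟩ => h213 ⟨i, List.mem_cons_of_mem _ hi, hrest⟩⟩
  exact List.pair_sublist_reverse_cons.2 (Or.inl hab)

theorem lam {m : ℤ} (hm : m ∈ x :: H) (hmV : ∀ y ∈ V, m < y) (h : AvoidsPatterns ⟨V, x :: H⟩) :
    AvoidsPatterns ⟨x :: V, H⟩ := by
  obtain ⟨h132, h12, h213⟩ := h
  refine ⟨fun ⟨a, b, c, habc, hlt⟩ =>
    h132 ⟨a, b, c, List.triple_sublist_reverse_cons.2 (Or.inl habc), hlt⟩, ?_, ?_⟩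
  · rintro ⟨a, b, hab, hlt⟩
    rcases List.pair_sublist_reverse_cons.1 hab with hab | ⟨ha, rfl⟩
    · exact h12 ⟨a, b, hab, hlt⟩
    · rcases List.mem_cons.1 hm with rfl | hm
      · exact (hmV a ha).asymm hlt
      · exact h213 ⟨a, ha, m, b, List.pair_sublist_reverse_cons.2 (Or.inr ⟨hm, rfl⟩),
          hmV a ha, hlt⟩
  · rintro ⟨i, hi, j, k, hjk, hji, hik⟩
    rcases List.mem_cons.1 hi with rfl | hi
    · exact h132 ⟨j, k, i, List.triple_sublist_reverse_cons.2 (Or.inr ⟨hjk, rfl⟩), hji, hik⟩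
    · exact h213 ⟨i, hi, j, k, List.pair_sublist_reverse_cons.2 (Or.inl hjk), hji, hik⟩

end AvoidsPatterns

def SortedBelow (out : List ℤ) (c : SConf) : Prop :=
  out.Pairwise (· < ·) ∧ ∀ a ∈ out, ∀ b ∈ c.elems, a < b

namespace SortedBelow

theorem nil (c : SConf) : SortedBelow [] c := ⟨List.Pairwise.nil, by simp⟩

theorem of_perm {out : List ℤ} {c c' : SConf} (h : SortedBelow out c)
    (hp : c'.elems.Perm c.elems) : SortedBelow out c' :=
  ⟨h.1, fun a ha b hb => h.2 a ha b (hp.subset hb)⟩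

theorem append_singleton_iff {out V H : List ℤ} {x : ℤ} :
    SortedBelow (out ++ [x]) ⟨V, H⟩ ↔ SortedBelow out ⟨x :: V, H⟩ ∧ ∀ b ∈ V ++ H, x < b := by
  simp only [SortedBelow, SConf.elems, List.pairwise_append, List.pairwise_singleton,
    List.mem_append, List.mem_cons, List.not_mem_nil, or_false, true_and]
  constructor
  · rintro ⟨⟨hout, hx⟩, hlt⟩
    refine ⟨⟨hout, fun a ha b hb => ?_⟩, fun b hb => hlt x (Or.inr rfl) b hb⟩
    rcases hb with (rfl | hb) | hb
    · exact hx a ha b rfl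
    all_goals exact hlt a (Or.inl ha) b (by tauto)
  · rintro ⟨⟨hout, hlt⟩, hx⟩
    refine ⟨⟨hout, fun a ha b hb => hb ▸ hlt a ha x (Or.inl (Or.inl rfl))⟩, ?_⟩
    rintro a (ha | rfl) b hb
    · exact hlt a ha b (by tauto)
    · exact hx b hb

end SortedBelow

/-- `SortedPops out c`: after the output `out`, the configuration `c` can be emptied by `λ` and
`μ` so that the whole output is increasing. -/
inductive SortedPops : List ℤ → SConf → Prop
  | done {out : List ℤ} : out.Pairwise (· < ·) → SortedPops out ⟨[], []⟩
  | lam {out V H : List ℤ} {x : ℤ} : SortedPops out ⟨x :: V, H⟩ → SortedPops out ⟨V, x :: H⟩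
  | mu {out V H : List ℤ} {x : ℤ} : SortedPops (out ++ [x]) ⟨V, H⟩ → SortedPops out ⟨x :: V, H⟩

namespace SortedPops

theorem iff_exists_run {out : List ℤ} {c : SConf} :
    SortedPops out c ↔ ∃ (w : List Op) (out' : List ℤ), Op.push ∉ w ∧
      runOps w ⟨[], c.H, c.V, out⟩ = some ⟨[], [], [], out'⟩ ∧ out'.Pairwise (· < ·) := by
  constructor
  · intro h
    induction h with
    | done hout => exact ⟨[], _, List.not_mem_nil, rfl, hout⟩
    | lam _ ih =>
      obtain ⟨w, out', hw, hrun, hs⟩ := ih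
      exact ⟨Op.lam :: w, out', by simpa using hw, by simpa [runOps, stepOp] using hrun, hs⟩
    | mu _ ih =>
      obtain ⟨w, out', hw, hrun, hs⟩ := ih
      exact ⟨Op.mu :: w, out', by simpa using hw, by simpa [runOps, stepOp] using hrun, hs⟩
  · rintro ⟨w, out', hw, hrun, hs⟩
    induction w generalizing out c with
    | nil =>
      obtain ⟨V, H⟩ := c
      simp only [runOps, Option.some.injEq, Conf.mk.injEq, true_and] at hrun
      obtain ⟨rfl, rfl, rfl⟩ := hrun
      exact .done hs
    | cons o w ih =>
      obtain ⟨V, H⟩ := c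
      rw [List.mem_cons, not_or] at hw
      cases o with
      | push => exact absurd rfl hw.1
      | lam =>
        cases H with
        | nil => simp [runOps, stepOp] at hrun
        | cons x H => exact .lam (ih hw.2 (by simpa [runOps, stepOp] using hrun))
      | mu =>
        cases V with
        | nil => simp [runOps, stepOp] at hrun
        | cons x V => exact .mu (ih hw.2 (by simpa [runOps, stepOp] using hrun))

theorem sortedBelow_and_avoidsPatterns {out : List ℤ} {c : SConf} (h : SortedPops out c) :
    SortedBelow out c ∧ AvoidsPatterns c := by
  induction h with
  | done hout => exact ⟨⟨hout, by simp [SConf.elems]⟩, .nil⟩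
  | lam _ ih => exact ⟨ih.1.of_perm List.perm_middle, ih.2.of_lam⟩
  | mu _ ih =>
    obtain ⟨hbelow, hx⟩ := SortedBelow.append_singleton_iff.1 ih.1
    exact ⟨hbelow, ih.2.of_mu hx⟩

theorem of_avoidsPatterns {out V H : List ℤ} (hnd : (SConf.elems ⟨V, H⟩).Nodup)
    (hout : SortedBelow out ⟨V, H⟩) (hc : AvoidsPatterns ⟨V, H⟩) : SortedPops out ⟨V, H⟩ := by
  by_cases hemp : V ++ H = []
  · obtain ⟨rfl, rfl⟩ := List.append_eq_nil_iff.1 hemp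
    exact .done hout.1
  have hmin : ∀ b ∈ V ++ H, (V ++ H).min hemp ≤ b := fun b hb => List.min_le_of_mem hb
  rcases List.mem_append.1 (List.min_mem hemp) with hmV | hmH
  · obtain ⟨v, V, rfl⟩ := List.exists_cons_of_ne_nil (List.ne_nil_of_mem hmV)
    have hnd' : v ∉ V ++ H ∧ (V ++ H).Nodup := List.nodup_cons.1 hnd
    have hvm : v ≤ (v :: V ++ H).min hemp := by
      rcases List.mem_cons.1 hmV with h | h
      · exact h.ge
      · exact le_of_not_hasPattern12_cons hc.2.1 h
    have hv : ∀ b ∈ V ++ H, v < b := fun b hb =>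
      lt_of_le_of_ne (hvm.trans (hmin b (List.mem_cons_of_mem _ hb)))
        (fun h => hnd'.1 (h ▸ hb))
    exact .mu (of_avoidsPatterns hnd'.2 (SortedBelow.append_singleton_iff.2 ⟨hout, hv⟩) hc.pop)
  · obtain ⟨x, H, rfl⟩ := List.exists_cons_of_ne_nil (List.ne_nil_of_mem hmH)
    have hmV : ∀ y ∈ V, (V ++ x :: H).min hemp < y := fun y hy =>
      lt_of_le_of_ne (hmin y (List.mem_append_left _ hy))
        (fun h => List.disjoint_of_nodup_append hnd hy (h ▸ hmH))
    have hp : (SConf.elems ⟨x :: V, H⟩).Perm (SConf.elems ⟨V, x :: H⟩) := List.perm_middle.symm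
    exact .lam (of_avoidsPatterns (hp.nodup_iff.2 hnd) (hout.of_perm hp) (hc.lam hmH hmV))
termination_by 2 * H.length + V.length

end SortedPops

theorem poppable_iff_sortedPops {c : SConf} : Poppable c ↔ SortedPops [] c :=
  SortedPops.iff_exists_run.symm

/-- A stack configuration `c` (with distinct elements) is poppable if and only if
`H` avoids the pattern 132, `V` avoids the pattern 12, and `(V,H)` avoids `|2|13|`. -/
theorem poppable_iff_patterns (c : SConf) (hnd : c.elems.Nodup) :
    Poppable c ↔ ¬ HasPattern132 c.H ∧ ¬ HasPattern12 c.V ∧ ¬ HasPattern2_13 c := by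
  rw [poppable_iff_sortedPops]
  exact ⟨fun h => h.sortedBelow_and_avoidsPatterns.2,
    SortedPops.of_avoidsPatterns hnd (SortedBelow.nil c)⟩
end

section
/- If a stack configuration c is poppable, then there is exactly one sequence of operations λ and μ that outputs all elements of c in increasing order. -/
/-! In a successful sorted popping run the next move is always forced. A `μ` outputs the top
`x` of `V` before everything still on the stacks, so it requires `x` to be smaller than all of
them; a `λ` puts the top `y` of `H` above `x`, so `y` leaves before `x` and `y < x`. Hence `μ` is
played exactly when the top of `V` is the minimum of the remaining elements. -/

theorem runOps_nil_nil_cons (a : Op) (w : List Op) (o : List ℤ) :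
    runOps (a :: w) ⟨[], [], [], o⟩ = none := by
  cases a <;> rfl

theorem exists_output_of_runOps_eq_some {w : List Op} {h v o out : List ℤ}
    (hr : runOps w ⟨[], h, v, o⟩ = some ⟨[], [], [], out⟩) :
    ∃ o', out = o ++ o' ∧ v.Sublist o' ∧ o'.Perm (v ++ h) := by
  induction w generalizing h v o with
  | nil =>
    obtain ⟨rfl, rfl, rfl⟩ : h = [] ∧ v = [] ∧ o = out := by simpa [runOps] using hr
    exact ⟨[], by simp, .slnil, .nil⟩
  | cons a w ih =>
    cases a with
    | push => simp [runOps, stepOp] at hr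
    | lam =>
      cases h with
      | nil => simp [runOps, stepOp] at hr
      | cons y h =>
        obtain ⟨o', rfl, hsub, hperm⟩ := ih hr
        exact ⟨o', rfl, List.sublist_of_cons_sublist hsub, hperm.trans List.perm_middle.symm⟩
    | mu =>
      cases v with
      | nil => simp [runOps, stepOp] at hr
      | cons x v =>
        obtain ⟨o', rfl, hsub, hperm⟩ := ih hr
        exact ⟨x :: o', by simp, hsub.cons_cons x, hperm.cons x⟩

theorem lt_of_runOps_mu_cons {w : List Op} {h v o out : List ℤ} {x : ℤ}
    (hr : runOps (Op.mu :: w) ⟨[], h, x :: v, o⟩ = some ⟨[], [], [], out⟩)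
    (hs : out.Pairwise (· < ·)) : ∀ z ∈ v ++ h, x < z := by
  obtain ⟨o', rfl, -, hperm⟩ := exists_output_of_runOps_eq_some (w := w) hr
  intro z hz
  rw [List.append_assoc, List.singleton_append] at hs
  exact List.rel_of_pairwise_cons (List.pairwise_append.1 hs).2.1 (hperm.mem_iff.2 hz)

theorem lt_of_runOps_lam_cons {w : List Op} {h v o out : List ℤ} {x y : ℤ}
    (hr : runOps (Op.lam :: w) ⟨[], y :: h, x :: v, o⟩ = some ⟨[], [], [], out⟩)
    (hs : out.Pairwise (· < ·)) : y < x := by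
  obtain ⟨o', rfl, hsub, -⟩ := exists_output_of_runOps_eq_some (w := w) hr
  have hyx : [y, x].Sublist (o ++ o') :=
    (((List.nil_sublist v).cons_cons x).cons_cons y |>.trans hsub).trans
      (List.sublist_append_right o o')
  exact List.rel_of_pairwise_cons (hs.sublist hyx) (List.mem_singleton_self x)

theorem eq_of_runOps_sorted {w₁ w₂ : List Op} {h v o out₁ out₂ : List ℤ}
    (hr₁ : runOps w₁ ⟨[], h, v, o⟩ = some ⟨[], [], [], out₁⟩) (hs₁ : out₁.Pairwise (· < ·))
    (hr₂ : runOps w₂ ⟨[], h, v, o⟩ = some ⟨[], [], [], out₂⟩) (hs₂ : out₂.Pairwise (· < ·)) :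
    w₁ = w₂ := by
  induction w₁ generalizing w₂ h v o with
  | nil =>
    obtain ⟨rfl, rfl, -⟩ : h = [] ∧ v = [] ∧ o = out₁ := by simpa [runOps] using hr₁
    cases w₂ with
    | nil => rfl
    | cons a w₂ => simp [runOps_nil_nil_cons] at hr₂
  | cons a₁ w₁ ih =>
    cases w₂ with
    | nil =>
      obtain ⟨rfl, rfl, -⟩ : h = [] ∧ v = [] ∧ o = out₂ := by simpa [runOps] using hr₂
      simp [runOps_nil_nil_cons] at hr₁
    | cons a₂ w₂ =>
      cases a₁ <;> cases a₂
      case lam.lam =>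
        obtain _ | ⟨y, h⟩ := h
        · simp [runOps, stepOp] at hr₁
        · rw [ih hr₁ hr₂]
      case mu.mu =>
        obtain _ | ⟨x, v⟩ := v
        · simp [runOps, stepOp] at hr₁
        · rw [ih hr₁ hr₂]
      case lam.mu =>
        obtain _ | ⟨y, h⟩ := h
        · simp [runOps, stepOp] at hr₁
        obtain _ | ⟨x, v⟩ := v
        · simp [runOps, stepOp] at hr₂
        exact absurd (lt_of_runOps_lam_cons hr₁ hs₁)
          (lt_of_runOps_mu_cons hr₂ hs₂ y (by simp)).asymm
      case mu.lam =>
        obtain _ | ⟨y, h⟩ := h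
        · simp [runOps, stepOp] at hr₂
        obtain _ | ⟨x, v⟩ := v
        · simp [runOps, stepOp] at hr₁
        exact absurd (lt_of_runOps_lam_cons hr₂ hs₂)
          (lt_of_runOps_mu_cons hr₁ hs₁ y (by simp)).asymm
      all_goals simp [runOps, stepOp] at hr₁ hr₂

theorem poppable_unique_popping_general (c : SConf) (hpop : Poppable c) :
    ∃! w : List Op, Op.push ∉ w ∧
      ∃ out : List ℤ, runOps w ⟨[], c.H, c.V, []⟩ = some ⟨[], [], [], out⟩ ∧
        out.Pairwise (· < ·) := by
  obtain ⟨w, out, hw, hr, hs⟩ := hpop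
  refine ⟨w, ⟨hw, out, hr, hs⟩, ?_⟩
  rintro w' ⟨-, out', hr', hs'⟩
  exact eq_of_runOps_sorted hr' hs' hr hs

/-- If a stack configuration `c` (with distinct elements) is poppable, then there is
exactly one sequence of operations `λ`, `μ` outputting all its elements in
increasing order. -/
theorem poppable_unique_popping (c : SConf) (hnd : c.elems.Nodup) (hpop : Poppable c) :
    ∃! w : List Op, Op.push ∉ w ∧
      ∃ out : List ℤ, runOps w ⟨[], c.H, c.V, []⟩ = some ⟨[], [], [], out⟩ ∧
        out.Pairwise (· < ·) :=
  poppable_unique_popping_general c hpop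
end

section
/- For any permutation σ, any stack word (respectively sorting word) w applied to σ, and any set of integers I, the restriction w_{|I} is also a stack word (respectively a sorting word). -/
/-!
Follow the letters acting on elements of `I` along the run of `w`. A `ρ` on such an element puts
it into `H`, a `λ` moves it from `H` to `V`, a `μ` removes it from `V`; hence on every prefix `v`
of `w_{|I}`, `|v|_ρ - |v|_λ` and `|v|_λ - |v|_μ` are the numbers of elements of `I` in `H` and in
`V`, which are nonnegative. If `w` is a sorting word, the same count for all letters shows that
both stacks end empty, so the final counts of `w_{|I}` balance as well.
-/

/-- `restrictWord` for an arbitrary predicate, so that `w` itself is the restriction to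
`fun _ => true`. -/
def restrictBy (dw : List (Op × ℤ)) (q : ℤ → Bool) : List Op :=
  (dw.filter (fun p => q p.2)).map Prod.fst

theorem restrictBy_cons (p : Op × ℤ) (dw : List (Op × ℤ)) (q : ℤ → Bool) :
    restrictBy (p :: dw) q = (if q p.2 then [p.1] else []) ++ restrictBy dw q := by
  by_cases h : q p.2 <;> simp [restrictBy, h]

theorem countOp_cons (a : Op) (w : List Op) (o : Op) :
    countOp (a :: w) o = (if a = o then 1 else 0) + countOp w o := by
  by_cases h : a = o <;> simp [countOp, h, Nat.add_comm]

theorem decorate_map_fst {w : List Op} {c : Conf} {dw : List (Op × ℤ)}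
    (h : decorate w c = some dw) : dw.map Prod.fst = w := by
  induction w, c using decorate.induct generalizing dw with
  | case1 => simp_all [decorate]
  | case5 => simp_all [decorate]
  | _ =>
    simp only [decorate, Option.map_eq_some_iff] at h
    obtain ⟨dw, hdw, rfl⟩ := h
    simp [*]

theorem decorate_take {w : List Op} {c : Conf} {dw : List (Op × ℤ)}
    (h : decorate w c = some dw) (k : ℕ) : decorate (w.take k) c = some (dw.take k) := by
  induction w, c using decorate.induct generalizing dw k with
  | case1 => simp_all [decorate]
  | case5 => simp_all [decorate]
  | _ =>
    simp only [decorate, Option.map_eq_some_iff] at h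
    obtain ⟨dw, hdw, rfl⟩ := h
    cases k <;> simp [decorate, *]

theorem decorate_balance {w : List Op} {c : Conf} {dw : List (Op × ℤ)}
    (h : decorate w c = some dw) : ∃ c', runOps w c = some c' ∧ ∀ q : ℤ → Bool,
      countOp (restrictBy dw q) .push + c.H.countP q =
          countOp (restrictBy dw q) .lam + c'.H.countP q ∧
        countOp (restrictBy dw q) .lam + c.V.countP q =
          countOp (restrictBy dw q) .mu + c'.V.countP q := by
  induction w, c using decorate.induct generalizing dw with
  | case1 => simp_all [decorate, runOps, restrictBy, countOp]
  | case5 => simp_all [decorate]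
  | case2 _ x _ _ _ _ ih | case3 _ _ x _ _ _ ih | case4 _ _ _ x _ _ ih =>
    simp only [decorate, Option.map_eq_some_iff] at h
    obtain ⟨dw, hdw, rfl⟩ := h
    obtain ⟨c', hrun, hbal⟩ := ih hdw
    refine ⟨c', by simpa [runOps, stepOp], fun q => ?_⟩
    have := hbal q
    by_cases hq : q x <;>
      simp only [restrictBy_cons, countOp_cons, List.countP_cons, hq, if_true, if_false,
        Bool.false_eq_true, List.cons_append, List.nil_append, reduceCtorEq] at this ⊢ <;> omega

theorem decorate_initConf_balance {σ : List ℤ} {w : List Op} {dw : List (Op × ℤ)}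
    (h : decorate w (initConf σ) = some dw) : ∃ c', runOps w (initConf σ) = some c' ∧
      ∀ q : ℤ → Bool,
        countOp (restrictBy dw q) .push = countOp (restrictBy dw q) .lam + c'.H.countP q ∧
        countOp (restrictBy dw q) .lam = countOp (restrictBy dw q) .mu + c'.V.countP q := by
  simpa [initConf] using decorate_balance h

theorem isStackWord_restrictBy {σ : List ℤ} {w : List Op} {dw : List (Op × ℤ)}
    (h : decorate w (initConf σ) = some dw) (q : ℤ → Bool) :
    IsStackWord (restrictBy dw q) := by
  intro v hv
  obtain ⟨d, hd, rfl⟩ : ∃ d, d <+: dw ∧ v = restrictBy d q := by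
    simpa [restrictBy, List.prefix_map_iff, List.prefix_filter_iff] using hv
  obtain ⟨c', -, hbal⟩ := decorate_initConf_balance (decorate_take h d.length)
  rw [← List.prefix_iff_eq_take.1 hd] at hbal
  have := hbal q
  omega

theorem isSortingWord_restrictBy {σ : List ℤ} {w : List Op} {dw : List (Op × ℤ)}
    (h : decorate w (initConf σ) = some dw)
    (hw : countOp w .push = countOp w .lam ∧ countOp w .lam = countOp w .mu) (q : ℤ → Bool) :
    IsSortingWord (restrictBy dw q) := by
  obtain ⟨c', -, hbal⟩ := decorate_initConf_balance h
  have hall : restrictBy dw (fun _ => true) = w := by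
    simpa [restrictBy] using decorate_map_fst h
  have hempty : c'.H = [] ∧ c'.V = [] := by
    have := hbal fun _ => true
    simp only [hall, List.countP_true] at this
    exact ⟨List.length_eq_zero_iff.1 (by omega), List.length_eq_zero_iff.1 (by omega)⟩
  have := hbal q
  simp only [hempty, List.countP_nil, add_zero] at this
  exact ⟨isStackWord_restrictBy h q, this⟩

theorem restrict_stackWord_general (σ : List ℤ) (w : List Op)
    (dw : List (Op × ℤ)) (I : Finset ℤ)
    (hdw : decorate w (initConf σ) = some dw) :
    IsStackWord (restrictWord dw I) ∧
      (IsSortingWord w → IsSortingWord (restrictWord dw I)) :=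
  ⟨isStackWord_restrictBy hdw (· ∈ I), fun hw => isSortingWord_restrictBy hdw hw.2 (· ∈ I)⟩

/-- For any permutation `σ`, any stack word (resp. sorting word) `w` applied to `σ`
(with decorated word `dw`), and any set of integers `I`, the restriction `w_{|I}`
is again a stack word (resp. sorting word). -/
theorem restrict_stackWord (σ : List ℤ) (hσ : σ.Nodup) (w : List Op)
    (dw : List (Op × ℤ)) (I : Finset ℤ)
    (hdw : decorate w (initConf σ) = some dw) (hsw : IsStackWord w) :
    IsStackWord (restrictWord dw I) ∧
      (IsSortingWord w → IsSortingWord (restrictWord dw I)) :=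
  restrict_stackWord_general σ w dw I hdw
end

section
/- If σ = ⊖[B_1,…,B_k] is the ⊖-decomposition of σ, then in any poppable stack configuration reachable for σ, for all i < j the elements of B_i lie below the elements of B_j in each of the two stacks. -/
/-!
Reading `H` from bottom to top and then the remaining input always gives a subsequence of the
previous such reading, so `H` lists its elements bottom to top in the order of `σ`; dually, the
output followed by `V` (top to bottom) only grows as a subsequence, so a poppable configuration
has `V` increasing from top to bottom. Since every element of `B_i` exceeds and precedes every
element of `B_j` in `σ`, the element of `B_j` is above that of `B_i` in both stacks.
-/

open List

theorem stepOp_sublist {o : Op} {c c' : Conf} (h : stepOp o c = some c') :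
    c'.H.reverse ++ c'.input <+ c.H.reverse ++ c.input ∧
      c.output ++ c.V <+ c'.output ++ c'.V := by
  rcases c with ⟨_ | ⟨a, inp⟩, _ | ⟨b, H⟩, _ | ⟨d, V⟩, out⟩ <;> cases o <;>
    simp [stepOp] at h <;> subst h <;> simp

theorem runOps_sublist : ∀ {w : List Op} {c c' : Conf}, runOps w c = some c' →
    c'.H.reverse ++ c'.input <+ c.H.reverse ++ c.input ∧
      c.output ++ c.V <+ c'.output ++ c'.V
  | [], c, c', h => by cases h; exact ⟨Sublist.refl _, Sublist.refl _⟩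
  | o :: w, c, c', h => by
    obtain ⟨c₁, h₁, h₂⟩ := Option.bind_eq_some_iff.mp h
    obtain ⟨hH₁, hV₁⟩ := stepOp_sublist h₁
    obtain ⟨hH₂, hV₂⟩ := runOps_sublist h₂
    exact ⟨hH₂.trans hH₁, hV₁.trans hV₂⟩

theorem ReachesConf.reverse_H_sublist {σ : List ℤ} {w : List Op} {c : SConf}
    (h : ReachesConf σ w c) : c.H.reverse <+ σ := by
  obtain ⟨inp, out, hrun⟩ := h
  simpa [initConf] using (sublist_append_left _ _).trans (runOps_sublist hrun).1

theorem Poppable.pairwise_lt_V {c : SConf} (h : Poppable c) : c.V.Pairwise (· < ·) := by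
  obtain ⟨w, out, -, hrun, hout⟩ := h
  exact hout.sublist (by simpa using (runOps_sublist hrun).2)

theorem List.Sublist.pair_sublist {α : Type*} {l r₁ r₂ : List α} {x y : α}
    (h : l <+ r₁ ++ r₂) (hx : x ∈ l) (hy : y ∈ l) (hx₂ : x ∉ r₂) (hy₁ : y ∉ r₁) :
    [x, y] <+ l := by
  obtain ⟨l₁, l₂, rfl, h₁, h₂⟩ := sublist_append_iff.mp h
  have hx₁ : x ∈ l₁ := (mem_append.mp hx).resolve_right fun h => hx₂ (h₂.subset h)
  have hy₂ : y ∈ l₂ := (mem_append.mp hy).resolve_left fun h => hy₁ (h₁.subset h)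
  exact (singleton_sublist.mpr hx₁).append (singleton_sublist.mpr hy₂)

theorem List.Pairwise.pair_sublist {α : Type*} [Preorder α] {l : List α} {x y : α}
    (hl : l.Pairwise (· < ·)) (hx : x ∈ l) (hy : y ∈ l) (hxy : x < y) : [x, y] <+ l :=
  sublist_of_subperm_of_pairwise
    (subperm_of_subset (by simpa using hxy.ne) (by simp [hx, hy])) (by simpa using hxy) hl

theorem aboveIn_of_pair_sublist {L : List ℤ} {y x : ℤ} (h : [y, x] <+ L) : AboveIn L y x := by
  obtain ⟨f, hf⟩ := sublist_iff_exists_fin_orderEmbedding_get_eq.mp h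
  exact ⟨f 0, f 1, (f 0).2, (f 1).2, f.strictMono (by simp), (hf 0).symm, (hf 1).symm⟩

theorem IsDecBlocks.exists_split {τ : List ℤ} {Bs : List (List ℤ)} (h : IsDecBlocks τ Bs)
    {i j : ℕ} (hij : i < j) (hj : j < Bs.length) {x y : ℤ}
    (hx : x ∈ Bs.getD i []) (hy : y ∈ Bs.getD j []) :
    ∃ l₁ l₂ : List ℤ, τ = l₁ ++ l₂ ∧ x ∈ l₁ ∧ y ∈ l₂ ∧ ∀ a ∈ l₁, ∀ b ∈ l₂, b < a := by
  obtain ⟨rfl, -, hpw⟩ := h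
  rw [← take_append_drop j Bs] at hpw
  refine ⟨(Bs.take j).flatten, (Bs.drop j).flatten, by rw [← flatten_append, take_append_drop],
    mem_flatten.mpr ⟨Bs[i], ?_, ?_⟩, mem_flatten.mpr ⟨Bs[j], ?_, ?_⟩, ?_⟩
  · exact mem_take_iff_getElem.mpr ⟨i, by omega, rfl⟩
  · simpa [getD_eq_getElem?_getD, hij.trans hj] using hx
  · exact mem_drop_iff_getElem.mpr ⟨0, by simpa using hj, by simp⟩
  · simpa [getD_eq_getElem?_getD, hj] using hy
  · simp only [mem_flatten]
    rintro a ⟨B, hB, ha⟩ b ⟨B', hB', hb⟩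
    exact (pairwise_append.mp hpw).2.2 B hB B' hB' a ha b hb

theorem blocks_oneUponTheOther_general (σ : List ℤ) (Bs : List (List ℤ))
    (hdec : IsMinusDecomposition σ Bs) (c : SConf)
    (hreach : Reachable σ c) (hpop : Poppable c) :
    ∀ i j : ℕ, i < j → j < Bs.length →
      ∀ x ∈ Bs.getD i [], ∀ y ∈ Bs.getD j [],
        (x ∈ c.H → y ∈ c.H → AboveIn c.H y x) ∧
        (x ∈ c.V → y ∈ c.V → AboveIn c.V y x) := by
  intro i j hij hj x hx y hy
  obtain ⟨l₁, l₂, rfl, hx₁, hy₂, hlt⟩ := hdec.1.exists_split hij hj hx hy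
  refine ⟨fun hxH hyH => ?_, fun hxV hyV => ?_⟩
  · obtain ⟨w, -, hw⟩ := hreach
    have hxy : [x, y] <+ c.H.reverse :=
      hw.reverse_H_sublist.pair_sublist (mem_reverse.mpr hxH)
        (mem_reverse.mpr hyH) (fun hx₂ => (hlt x hx₁ x hx₂).false)
        (fun hy₁ => (hlt y hy₁ y hy₂).false)
    exact aboveIn_of_pair_sublist (by simpa using hxy.reverse)
  · exact aboveIn_of_pair_sublist (hpop.pairwise_lt_V.pair_sublist hyV hxV (hlt x hx₁ y hy₂))

/-- If `σ = ⊖[B_1, …, B_k]`, then in any poppable stack configuration reachable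
for `σ`, for all `i < j` the elements of `B_i` lie below the elements of `B_j`
in each of the two stacks. -/
theorem blocks_oneUponTheOther (σ : List ℤ) (hσ : σ.Nodup) (Bs : List (List ℤ))
    (hdec : IsMinusDecomposition σ Bs) (c : SConf)
    (hreach : Reachable σ c) (hpop : Poppable c) :
    ∀ i j : ℕ, i < j → j < Bs.length →
      ∀ x ∈ Bs.getD i [], ∀ y ∈ Bs.getD j [],
        (x ∈ c.H → y ∈ c.H → AboveIn c.H y x) ∧
        (x ∈ c.V → y ∈ c.V → AboveIn c.V y x) :=
  blocks_oneUponTheOther_general σ Bs hdec c hreach hpop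
end

section
/- Let σ be a 2-stack sortable permutation and w = uv a sorting word for σ such that after performing the operations of u, the elements 1,…,i−1 have been output and the elements i,…,j all lie at the top of the stacks (above every other element remaining in the stacks). Then there exists a sorting word w′ = u u′ u″ for σ in which u′ consists exactly of the operations that move the elements i,…,j from the stacks to the output in increasing order, without moving any other element. -/
/-!
Because the output is increasing and everything below `i` is already out, the elements of
`[i, j]` are the next ones that `v` outputs. So `v` never puts a larger element above one of them
in `V`, and never outputs a larger element while one of them is still in the stacks. The letters
of `v` acting on the elements of `[i, j]` therefore form a push-free word which, performed first,
outputs `i, …, j`; the remaining letters act only on larger elements and finish the sort.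
-/

def Conf.contents (c : Conf) : List ℤ := c.input ++ c.H ++ c.V ++ c.output

theorem runOps_cons (o : Op) (w : List Op) (c : Conf) :
    runOps (o :: w) c = (stepOp o c).bind (runOps w) := rfl

theorem runOps_append (a b : List Op) (c : Conf) :
    runOps (a ++ b) c = (runOps a c).bind (runOps b) := by
  induction a generalizing c with
  | nil => rfl
  | cons o a ih => simp only [List.cons_append, runOps_cons, Option.bind_assoc, ih]

theorem stepOp_contents_perm {o : Op} {c c' : Conf} (h : stepOp o c = some c') :
    c'.contents.Perm c.contents := by
  rcases c with ⟨_ | ⟨x, inp⟩, _ | ⟨y, H⟩, _ | ⟨z, V⟩, out⟩ <;> cases o <;>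
    simp only [stepOp, reduceCtorEq, Option.some.injEq] at h <;> subst h <;>
    exact List.perm_iff_count.2 fun a => by
      simp only [Conf.contents, List.count_append, List.count_cons, List.count_nil]; omega

theorem stepOp_output_prefix {o : Op} {c c' : Conf} (h : stepOp o c = some c') :
    c.output <+: c'.output := by
  rcases c with ⟨_ | ⟨x, inp⟩, _ | ⟨y, H⟩, _ | ⟨z, V⟩, out⟩ <;> cases o <;>
    simp only [stepOp, reduceCtorEq, Option.some.injEq] at h <;> subst h <;>
    simp

theorem runOps_contents_perm {w : List Op} {c c' : Conf} (h : runOps w c = some c') :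
    c'.contents.Perm c.contents := by
  induction w generalizing c with
  | nil => cases h; rfl
  | cons o w ih =>
    obtain ⟨d, hd, h⟩ := Option.bind_eq_some_iff.1 h
    exact (ih h).trans (stepOp_contents_perm hd)

theorem runOps_output_prefix {w : List Op} {c c' : Conf} (h : runOps w c = some c') :
    c.output <+: c'.output := by
  induction w generalizing c with
  | nil => cases h; exact List.prefix_rfl
  | cons o w ih =>
    obtain ⟨d, hd, h⟩ := Option.bind_eq_some_iff.1 h
    exact (stepOp_output_prefix hd).trans (ih h)

theorem perm_of_runOps_eq_some {w : List Op} {c : Conf} {inp H V q : List ℤ}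
    (h : runOps w c = some ⟨inp, H, V, c.output ++ q⟩) :
    (inp ++ H ++ V ++ q).Perm (c.input ++ c.H ++ c.V) :=
  List.perm_iff_count.2 fun a => by
    have := List.perm_iff_count.1 (runOps_contents_perm h) a
    simp only [Conf.contents, List.count_append] at this ⊢
    omega

theorem exists_eq_cons_of_runOps_eq_final {w : List Op} {inp H V o q : List ℤ} {s : ℤ}
    (h : runOps w ⟨inp, H, V, o ++ [s]⟩ = some ⟨[], [], [], o ++ q⟩) :
    ∃ q', q = s :: q' ∧ runOps w ⟨inp, H, V, o ++ [s]⟩ = some ⟨[], [], [], o ++ [s] ++ q'⟩ := by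
  obtain ⟨q', hq'⟩ := runOps_output_prefix h
  obtain rfl : q = s :: q' := by simpa using hq'.symm
  exact ⟨q', rfl, by rwa [List.append_assoc, List.singleton_append]⟩

theorem lt_of_mem_of_runOps_eq_final {w : List Op} {inp H V o q : List ℤ} {y : ℤ}
    (h : runOps w ⟨inp, H, V, o ++ [y]⟩ = some ⟨[], [], [], o ++ q⟩)
    (hq : q.Pairwise (· < ·)) : ∀ x ∈ inp ++ H ++ V, y < x := by
  obtain ⟨q, rfl, h'⟩ := exists_eq_cons_of_runOps_eq_final h
  exact fun x hx => List.rel_of_pairwise_cons hq <| by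
    simpa using (perm_of_runOps_eq_some (c := ⟨inp, H, V, o ++ [y]⟩) h').mem_iff.2 hx

theorem lt_of_above_in_V {w : List Op} {inp H A B o q : List ℤ} {x : ℤ}
    (h : runOps w ⟨inp, H, A ++ x :: B, o⟩ = some ⟨[], [], [], o ++ q⟩)
    (hq : q.Pairwise (· < ·)) : ∀ a ∈ A, a < x := by
  induction w generalizing inp H A o q with
  | nil => simp [runOps] at h
  | cons op w ih =>
    rw [runOps_cons] at h
    rcases op with _ | _ | _
    · rcases inp with _ | ⟨y, inp⟩
      · simp [stepOp] at h
      exact ih h hq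
    · rcases H with _ | ⟨y, H⟩
      · simp [stepOp] at h
      exact fun a ha => ih (A := y :: A) h hq a (List.mem_cons_of_mem y ha)
    · rcases A with _ | ⟨y, A⟩
      · simp
      simp only [List.cons_append, stepOp, Option.bind_some] at h
      rintro a (_ | ⟨_, ha⟩)
      · exact lt_of_mem_of_runOps_eq_final h hq x (by simp)
      obtain ⟨q, rfl, h'⟩ := exists_eq_cons_of_runOps_eq_final h
      exact ih h' hq.of_cons a ha

/-- Think of the configuration `⟨inp, bH ++ sH ++ H₂, sV ++ bV ++ V₂, o⟩`, whose small elements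
`sH`, `sV` sit on top of `H₂`, `V₂`: starting from it, `q` can be output by a push-free word moving
only the small elements (whatever the remaining input), followed by a word moving only the others. -/
def SmallFirstSplit (H₂ V₂ inp bH sH sV bV o q : List ℤ) : Prop :=
  ∃ (ws wb : List Op) (qs qb : List ℤ), q = qs ++ qb ∧ Op.push ∉ ws ∧
    (∀ inp₀, runOps ws ⟨inp₀, sH ++ H₂, sV ++ V₂, o⟩ = some ⟨inp₀, H₂, V₂, o ++ qs⟩) ∧
    runOps wb ⟨inp, bH ++ H₂, bV ++ V₂, o ++ qs⟩ = some ⟨[], [], [], o ++ q⟩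

namespace SmallFirstSplit

variable {H₂ V₂ inp bH sH sV bV o q : List ℤ}

theorem of_runOps {w : List Op}
    (h : runOps w ⟨inp, bH ++ H₂, bV ++ V₂, o⟩ = some ⟨[], [], [], o ++ q⟩) :
    SmallFirstSplit H₂ V₂ inp bH [] [] bV o q :=
  ⟨[], w, [], q, rfl, List.not_mem_nil, fun _ => by simp [runOps], by simpa using h⟩

theorem push {x : ℤ} (h : SmallFirstSplit H₂ V₂ inp (x :: bH) sH sV bV o q) :
    SmallFirstSplit H₂ V₂ (x :: inp) bH sH sV bV o q := by
  obtain ⟨ws, wb, qs, qb, hq, hws, hrun_s, hrun_b⟩ := h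
  exact ⟨ws, .push :: wb, qs, qb, hq, hws, hrun_s, hrun_b⟩

theorem lam_small {s : ℤ} (h : SmallFirstSplit H₂ V₂ inp bH sH (s :: sV) bV o q) :
    SmallFirstSplit H₂ V₂ inp bH (s :: sH) sV bV o q := by
  obtain ⟨ws, wb, qs, qb, hq, hws, hrun_s, hrun_b⟩ := h
  exact ⟨.lam :: ws, wb, qs, qb, hq, by simpa using hws, hrun_s, hrun_b⟩

theorem lam_large {b : ℤ} (h : SmallFirstSplit H₂ V₂ inp bH sH sV (b :: bV) o q) :
    SmallFirstSplit H₂ V₂ inp (b :: bH) sH sV bV o q := by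
  obtain ⟨ws, wb, qs, qb, hq, hws, hrun_s, hrun_b⟩ := h
  exact ⟨ws, .lam :: wb, qs, qb, hq, hws, hrun_s, hrun_b⟩

theorem mu_small {s : ℤ} (h : SmallFirstSplit H₂ V₂ inp bH sH sV bV (o ++ [s]) q) :
    SmallFirstSplit H₂ V₂ inp bH sH (s :: sV) bV o (s :: q) := by
  obtain ⟨ws, wb, qs, qb, rfl, hws, hrun_s, hrun_b⟩ := h
  refine ⟨.mu :: ws, wb, s :: qs, qb, rfl, by simpa using hws, fun inp₀ => ?_, ?_⟩
  · simpa [runOps_cons, stepOp] using hrun_s inp₀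
  · simpa using hrun_b

end SmallFirstSplit

theorem smallFirstSplit_of_runOps (t : ℤ) (H₂ V₂ : List ℤ) (w : List Op) :
    ∀ (inp bH sH sV bV o q : List ℤ),
    (∀ x ∈ sH ++ sV, x ≤ t) → (∀ x ∈ inp ++ bH ++ bV ++ H₂ ++ V₂, t < x) →
    q.Pairwise (· < ·) →
    runOps w ⟨inp, bH ++ (sH ++ H₂), sV ++ (bV ++ V₂), o⟩ = some ⟨[], [], [], o ++ q⟩ →
    SmallFirstSplit H₂ V₂ inp bH sH sV bV o q := by
  induction w with
  | nil =>
    intro inp bH sH sV bV o q _ _ _ hrun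
    simp only [runOps, Option.some.injEq, Conf.mk.injEq, List.append_eq_nil_iff] at hrun
    obtain ⟨rfl, ⟨rfl, rfl, rfl⟩, ⟨rfl, rfl, rfl⟩, ho⟩ := hrun
    exact .of_runOps (w := []) (by simpa [runOps] using ho)
  | cons op w ih =>
    intro inp bH sH sV bV o q hs hb hq hrun
    by_cases hsmall : sH = [] ∧ sV = []
    · obtain ⟨rfl, rfl⟩ := hsmall
      exact .of_runOps (by simpa using hrun)
    have hbig : ∀ x ∈ inp ++ bH ++ bV ++ H₂ ++ V₂, ∀ s ∈ sH ++ sV, s < x :=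
      fun x hx s hs' => (hs s hs').trans_lt (hb x hx)
    rw [runOps_cons] at hrun
    rcases op with _ | _ | _
    · rcases inp with _ | ⟨x, inp⟩
      · simp [stepOp] at hrun
      exact (ih inp (x :: bH) sH sV bV o q hs (fun y hy => hb y (by grind)) hq hrun).push
    · rcases bH with _ | ⟨b, bH⟩
      · rcases sH with _ | ⟨s, sH⟩
        · obtain ⟨s, sV, rfl⟩ := List.exists_cons_of_ne_nil (by simpa using hsmall)
          rcases H₂ with _ | ⟨x, H₂⟩
          · simp [stepOp] at hrun
          simp only [List.nil_append, stepOp, Option.bind_some] at hrun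
          exact absurd (lt_of_above_in_V (A := [x]) hrun hq x (by simp))
            (hbig x (by simp) s (by simp)).asymm
        simp only [List.nil_append, List.cons_append, stepOp, Option.bind_some] at hrun
        exact (ih inp [] sH (s :: sV) bV o q (fun y hy => hs y (by grind)) (by simpa using hb) hq
          (by simpa using hrun)).lam_small
      rcases sV with _ | ⟨s, sV⟩
      · simp only [List.cons_append, stepOp, Option.bind_some] at hrun
        exact (ih inp bH sH [] (b :: bV) o q hs (fun y hy => hb y (by grind)) hq hrun).lam_large
      simp only [List.cons_append, stepOp, Option.bind_some] at hrun
      exact absurd (lt_of_above_in_V (A := [b]) hrun hq b (by simp))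
        (hbig b (by simp) s (by simp)).asymm
    · rcases sV with _ | ⟨s, sV⟩
      · obtain ⟨s, sH, rfl⟩ := List.exists_cons_of_ne_nil (by simpa using hsmall)
        rcases hV : bV ++ V₂ with _ | ⟨c, V⟩
        · simp [hV, stepOp] at hrun
        have hc : c ∈ bV ++ V₂ := by simp [hV]
        simp only [List.nil_append, hV, stepOp, Option.bind_some] at hrun
        exact absurd (lt_of_mem_of_runOps_eq_final hrun hq s (by simp))
          (hbig c (by grind) s (by simp)).asymm
      simp only [List.cons_append, stepOp, Option.bind_some] at hrun
      obtain ⟨q, rfl, hrun'⟩ := exists_eq_cons_of_runOps_eq_final hrun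
      exact (ih inp bH sH sV bV (o ++ [s]) q (fun y hy => hs y (by grind)) hb hq.of_cons
        hrun').mu_small

-- `intRange` elaborates with `List.range` cast to `List ℤ` through the list monad.
theorem intRange_eq_map (i j : ℤ) :
    intRange i j = (List.range (j + 1 - i).toNat).map (fun t : ℕ => i + t) := by
  simp only [intRange, List.bind_eq_flatMap, List.pure_def, ← List.map_eq_flatMap, List.map_map]
  rfl

theorem mem_intRange {i j x : ℤ} : x ∈ intRange i j ↔ i ≤ x ∧ x ≤ j := by
  simp only [intRange_eq_map, List.mem_map, List.mem_range]
  constructor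
  · rintro ⟨t, ht, rfl⟩
    omega
  · exact fun h => ⟨(x - i).toNat, by omega, by omega⟩

theorem pairwise_lt_intRange (i j : ℤ) : (intRange i j).Pairwise (· < ·) := by
  rw [intRange_eq_map]
  exact List.pairwise_lt_range.map _ fun a b h => by omega

theorem eq_intRange_of_pairwise {l : List ℤ} {i j : ℤ} (hl : l.Pairwise (· < ·))
    (hmem : ∀ x, x ∈ l ↔ i ≤ x ∧ x ≤ j) : l = intRange i j :=
  List.Perm.eq_of_pairwise' hl (pairwise_lt_intRange i j) <|
    (List.perm_ext_iff_of_nodup hl.nodup (pairwise_lt_intRange i j).nodup).2 fun x => by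
      rw [hmem, mem_intRange]

theorem nodup_contents_of_runOps {σ : List ℤ} (hσ : σ.Nodup) {w : List Op} {c : Conf}
    (hrun : runOps w (initConf σ) = some c) : c.contents.Nodup :=
  (runOps_contents_perm hrun).nodup_iff.2 (by simpa [Conf.contents, initConf] using hσ)

theorem le_of_mem_remaining {σ : List ℤ} (hσ : σ.Nodup) {w : List Op} {c : Conf} {i : ℤ}
    (hrun : runOps w (initConf σ) = some c) (hout : ∀ x, x ∈ c.output ↔ x ∈ σ ∧ x < i) :
    ∀ x ∈ c.input ++ c.H ++ c.V, i ≤ x := by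
  intro x hx
  by_contra hlt
  have hxσ : x ∈ σ := by
    simpa [Conf.contents, initConf] using (runOps_contents_perm hrun).subset
      (List.mem_append_left c.output hx)
  exact List.disjoint_of_nodup_append (nodup_contents_of_runOps hσ hrun) hx
    ((hout x).2 ⟨hxσ, by omega⟩)

theorem perm_of_runOps_remove_tops {w : List Op} {inp H₁ H₂ V₁ V₂ o q : List ℤ}
    (h : runOps w ⟨inp, H₁ ++ H₂, V₁ ++ V₂, o⟩ = some ⟨inp, H₂, V₂, o ++ q⟩) :
    q.Perm (H₁ ++ V₁) :=
  List.perm_iff_count.2 fun a => by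
    have := List.perm_iff_count.1 (perm_of_runOps_eq_some h) a
    simp only [List.count_append] at this ⊢
    omega

theorem mem_tops_iff {P : ℤ → Prop} {H₁ H₂ V₁ V₂ : List ℤ}
    (hH₁ : ∀ x ∈ H₁, P x) (hH₂ : ∀ x ∈ H₂, ¬ P x) (hV₁ : ∀ x ∈ V₁, P x) (hV₂ : ∀ x ∈ V₂, ¬ P x)
    (htop : ∀ x, P x → x ∈ H₁ ++ H₂ ∨ x ∈ V₁ ++ V₂) (x : ℤ) : x ∈ H₁ ++ V₁ ↔ P x := by
  refine ⟨fun hx => (List.mem_append.1 hx).elim (hH₁ x) (hV₁ x), fun hx => ?_⟩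
  rcases htop x hx with hx' | hx' <;> simp only [List.mem_append] at hx' ⊢
  · exact Or.inl (hx'.resolve_right fun h => hH₂ x h hx)
  · exact Or.inr (hx'.resolve_right fun h => hV₂ x h hx)

theorem lt_of_mem_below_tops {σ : List ℤ} (hσ : σ.Nodup) {w : List Op}
    {inp H₁ H₂ V₁ V₂ out : List ℤ} {i j : ℤ}
    (hrun : runOps w (initConf σ) = some ⟨inp, H₁ ++ H₂, V₁ ++ V₂, out⟩)
    (hout : ∀ x, x ∈ out ↔ x ∈ σ ∧ x < i) (htops : ∀ x, x ∈ H₁ ++ V₁ ↔ i ≤ x ∧ x ≤ j) :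
    ∀ x ∈ inp ++ H₂ ++ V₂, j < x := by
  intro x hx
  have hix := le_of_mem_remaining hσ hrun hout x (by simp only [List.mem_append] at hx ⊢; tauto)
  by_contra hxj
  have hperm : (inp ++ (H₁ ++ H₂) ++ (V₁ ++ V₂) ++ out).Perm
      ((H₁ ++ V₁) ++ (inp ++ H₂ ++ V₂) ++ out) :=
    List.perm_iff_count.2 fun a => by simp only [List.count_append]; omega
  have hnodup := (hperm.nodup_iff.1 (nodup_contents_of_runOps hσ hrun)).of_append_left
  exact List.disjoint_of_nodup_append hnodup ((htops x).2 ⟨hix, by omega⟩) hx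

theorem pop_top_interval_general (σ : List ℤ) (hσ : σ.Nodup) (u v : List Op)
    (hsort : SortsTo σ (u ++ v)) (i j : ℤ)
    (inp H V out : List ℤ)
    (hrun : runOps u (initConf σ) = some ⟨inp, H, V, out⟩)
    (hout : ∀ x : ℤ, x ∈ out ↔ (x ∈ σ ∧ x < i))
    (H1 H2 V1 V2 : List ℤ)
    (hH : H = H1 ++ H2) (hV : V = V1 ++ V2)
    (hH1 : ∀ x ∈ H1, i ≤ x ∧ x ≤ j) (hH2 : ∀ x ∈ H2, ¬ (i ≤ x ∧ x ≤ j))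
    (hV1 : ∀ x ∈ V1, i ≤ x ∧ x ≤ j) (hV2 : ∀ x ∈ V2, ¬ (i ≤ x ∧ x ≤ j))
    (htop : ∀ x : ℤ, i ≤ x → x ≤ j → (x ∈ H ∨ x ∈ V)) :
    ∃ u' u'' : List Op, SortsTo σ (u ++ u' ++ u'') ∧ Op.push ∉ u' ∧
      runOps u' ⟨inp, H, V, out⟩ = some ⟨inp, H2, V2, out ++ intRange i j⟩ := by
  subst hH hV
  obtain ⟨outF, hrunF, hsorted, hpermF⟩ := hsort
  rw [runOps_append, hrun, Option.bind_some] at hrunF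
  obtain ⟨q, rfl⟩ := runOps_output_prefix hrunF
  have hq : q.Pairwise (· < ·) := hsorted.sublist (List.sublist_append_right _ _)
  have htops := mem_tops_iff hH1 hH2 hV1 hV2 fun x hx => htop x hx.1 hx.2
  obtain ⟨ws, wb, qs, qb, rfl, hws, hrun_s, hrun_b⟩ := smallFirstSplit_of_runOps j H2 V2 v
    inp [] H1 V1 [] out q (fun x hx => ((htops x).1 hx).2)
    (by simpa using lt_of_mem_below_tops hσ hrun hout htops) hq (by simpa using hrunF)
  obtain rfl : qs = intRange i j :=
    eq_intRange_of_pairwise (hq.sublist (List.sublist_append_left _ _)) fun x =>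
      (perm_of_runOps_remove_tops (hrun_s inp)).mem_iff.trans (htops x)
  refine ⟨ws, wb, ⟨_, ?_, hsorted, hpermF⟩, hws, hrun_s inp⟩
  rw [runOps_append, runOps_append, hrun, Option.bind_some, hrun_s, Option.bind_some]
  simpa using hrun_b

/-- If after performing `u` the elements smaller than `i` have been output and the
elements of `[i..j]` all lie at the top of the stacks, then the sorting word
`u ++ v` can be transformed into a sorting word `u ++ u' ++ u''` where `u'` pops
exactly the elements `i, …, j` in increasing order, moving no other element. -/
theorem pop_top_interval (σ : List ℤ) (hσ : σ.Nodup) (u v : List Op)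
    (hsort : SortsTo σ (u ++ v)) (i j : ℤ) (hij : i ≤ j)
    (inp H V out : List ℤ)
    (hrun : runOps u (initConf σ) = some ⟨inp, H, V, out⟩)
    (hout : ∀ x : ℤ, x ∈ out ↔ (x ∈ σ ∧ x < i))
    (hall : ∀ x : ℤ, i ≤ x → x ≤ j → x ∈ σ)
    (H1 H2 V1 V2 : List ℤ)
    (hH : H = H1 ++ H2) (hV : V = V1 ++ V2)
    (hH1 : ∀ x ∈ H1, i ≤ x ∧ x ≤ j) (hH2 : ∀ x ∈ H2, ¬ (i ≤ x ∧ x ≤ j))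
    (hV1 : ∀ x ∈ V1, i ≤ x ∧ x ≤ j) (hV2 : ∀ x ∈ V2, ¬ (i ≤ x ∧ x ≤ j))
    (htop : ∀ x : ℤ, i ≤ x → x ≤ j → (x ∈ H ∨ x ∈ V)) :
    ∃ u' u'' : List Op, SortsTo σ (u ++ u' ++ u'') ∧ Op.push ∉ u' ∧
      runOps u' ⟨inp, H, V, out⟩ = some ⟨inp, H2, V2, out ++ intRange i j⟩ :=
  pop_top_interval_general σ hσ u v hsort i j inp H V out hrun hout H1 H2 V1 V2 hH hV hH1 hH2 hV1
    hV2 htop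
end

section
/- For any index i and any j < min(p^{(i)}, q^{(i+1)}), the blocks B_j^{(i)} and B_j^{(i+1)} of the ⊖-decompositions of σ^{(i)} and σ^{(i+1)} are equal. -/
/-!
Write `c = σ_{k_{i+1}}` and let `m ∈ A^{(i)}` lie in blocks `p` and `q`. Since `σ_{k_i} ≤ c`,
keeping the entries of `σ^{(i)}` above `c` gives `A^{(i)}`, while `σ^{(i+1)}` is `A^{(i)}`
followed by entries occurring after position `k_i`, which are distinct from `m`. The blocks of
`σ^{(i)}` before `p` lie above `m > c`, so they survive the filtering; the blocks of `σ^{(i+1)}`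
before `q` end before `m`, hence inside `A^{(i)}`. Either way they are initial blocks of
`A^{(i)}`, each dominating everything after it, and such initial blocks are unique: two
different first blocks would split the longer one into two decreasing pieces, contradicting
its `⊖`-indecomposability.
-/

open List

lemma List.IsPrefix.getD_eq {α : Type*} {l₁ l₂ : List α} (h : l₁ <+: l₂) {i : ℕ}
    (hi : i < l₁.length) (d : α) : l₁.getD i d = l₂.getD i d := by
  rw [getD_eq_getElem _ _ hi, getD_eq_getElem _ _ (hi.trans_le h.length_le), h.getElem hi]

lemma List.getD_take_of_lt {α : Type*} {l : List α} {i n : ℕ} (h : i < n) (d : α) :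
    (l.take n).getD i d = l.getD i d := by
  rw [getD_eq_getElem?_getD, getElem?_take_of_lt h, ← getD_eq_getElem?_getD]

lemma List.lt_length_of_mem_getD {α : Type*} {Bs : List (List α)} {p : ℕ} {m : α}
    (hm : m ∈ Bs.getD p []) : p < Bs.length := by
  by_contra! hp
  exact not_mem_nil (getD_eq_default _ _ hp ▸ hm)

lemma List.mem_flatten_drop_of_mem_getD {α : Type*} {Bs : List (List α)} {p : ℕ} {m : α}
    (hm : m ∈ Bs.getD p []) : m ∈ (Bs.drop p).flatten := by
  have hp := lt_length_of_mem_getD hm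
  rw [getD_eq_getElem _ _ hp] at hm
  exact mem_flatten.mpr ⟨_, drop_eq_getElem_cons hp ▸ mem_cons_self, hm⟩

/-- `Cs` lists the first few blocks of a `⊖`-decomposition of `A`. -/
def IsLeadingMinusBlocks : List ℤ → List (List ℤ) → Prop
  | _, [] => True
  | A, B :: Cs => MinusIndecomposable B ∧
      ∃ R, A = B ++ R ∧ (∀ x ∈ B, ∀ y ∈ R, y < x) ∧ IsLeadingMinusBlocks R Cs

lemma MinusIndecomposable.eq_nil_of_append {B C : List ℤ} (h : MinusIndecomposable (B ++ C))
    (hB : B ≠ []) (hBC : ∀ x ∈ B, ∀ y ∈ C, y < x) : C = [] := by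
  by_contra hC
  have hdec : IsDecBlocks (B ++ C) [B, C] :=
    ⟨by simp, by simp [hB, hC], by simpa using hBC⟩
  simpa using h.2 _ hdec

lemma MinusIndecomposable.eq_of_append_eq_append {B B' R R' : List ℤ}
    (hB : MinusIndecomposable B) (hB' : MinusIndecomposable B') (h : B ++ R = B' ++ R')
    (hBR : ∀ x ∈ B, ∀ y ∈ R, y < x) (hBR' : ∀ x ∈ B', ∀ y ∈ R', y < x) : B = B' := by
  rcases append_eq_append_iff.mp h with ⟨C, rfl, rfl⟩ | ⟨C, rfl, rfl⟩
  · rw [hB'.eq_nil_of_append hB.1 fun x hx y hy => hBR x hx y (mem_append_left _ hy),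
      append_nil]
  · rw [hB.eq_nil_of_append hB'.1 fun x hx y hy => hBR' x hx y (mem_append_left _ hy),
      append_nil]

lemma IsLeadingMinusBlocks.prefix_or_prefix {A : List ℤ} {Cs Ds : List (List ℤ)}
    (hC : IsLeadingMinusBlocks A Cs) (hD : IsLeadingMinusBlocks A Ds) :
    Cs <+: Ds ∨ Ds <+: Cs := by
  induction Cs generalizing A Ds with
  | nil => exact Or.inl nil_prefix
  | cons B Cs ih =>
    cases Ds with
    | nil => exact Or.inr nil_prefix
    | cons B' Ds =>
      obtain ⟨hB, R, rfl, hBR, hR⟩ := hC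
      obtain ⟨hB', R', hA, hBR', hR'⟩ := hD
      obtain rfl := hB.eq_of_append_eq_append hB' hA hBR hBR'
      obtain rfl := append_cancel_left hA
      simpa only [cons_prefix_cons, true_and] using ih hR hR'

lemma IsLeadingMinusBlocks.getD_eq {A : List ℤ} {Cs Ds : List (List ℤ)}
    (hC : IsLeadingMinusBlocks A Cs) (hD : IsLeadingMinusBlocks A Ds) {i : ℕ}
    (hi : i < Cs.length) (hi' : i < Ds.length) : Cs.getD i [] = Ds.getD i [] := by
  rcases hC.prefix_or_prefix hD with h | h
  · exact h.getD_eq hi []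
  · exact (h.getD_eq hi' []).symm

lemma isLeadingMinusBlocks_take {Bs : List (List ℤ)} (hind : ∀ B ∈ Bs, MinusIndecomposable B)
    (hpw : Bs.Pairwise fun B B' => ∀ x ∈ B, ∀ y ∈ B', y < x) {n : ℕ} {R : List ℤ}
    (hR : R ⊆ (Bs.drop n).flatten) :
    IsLeadingMinusBlocks ((Bs.take n).flatten ++ R) (Bs.take n) := by
  induction Bs generalizing n with
  | nil => simp [IsLeadingMinusBlocks]
  | cons B Bs ih =>
    cases n with
    | zero => simp [IsLeadingMinusBlocks]
    | succ n =>
      obtain ⟨hBs, hpw⟩ := pairwise_cons.mp hpw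
      have hrest : (Bs.take n).flatten ++ R ⊆ Bs.flatten :=
        append_subset.mpr ⟨((take_sublist n Bs).flatten).subset,
          fun y hy => ((drop_sublist n Bs).flatten).subset (hR hy)⟩
      refine ⟨hind B mem_cons_self, _, by simp, fun x hx y hy => ?_,
        ih (fun B' hB' => hind B' (mem_cons_of_mem B hB')) hpw hR⟩
      obtain ⟨B', hB', hyB'⟩ := mem_flatten.mp (hrest hy)
      exact hBs B' hB' x hx y hyB'

lemma IsMinusDecomposition.isLeadingMinusBlocks_filter_take {τ : List ℤ} {Bs : List (List ℤ)}
    (h : IsMinusDecomposition τ Bs) {p : ℕ} {m c : ℤ} (hm : m ∈ Bs.getD p []) (hcm : c < m) :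
    IsLeadingMinusBlocks (τ.filter fun x => decide (c < x)) (Bs.take p) := by
  obtain ⟨⟨rfl, -, hpw⟩, hind⟩ := h
  have hpw' := pairwise_append.mp (take_append_drop p Bs ▸ hpw)
  have hm' := mem_flatten_drop_of_mem_getD hm
  have hkeep : ((Bs.take p).flatten.filter fun x => decide (c < x)) = (Bs.take p).flatten := by
    refine filter_eq_self.mpr fun x hx => ?_
    obtain ⟨B, hB, hxB⟩ := mem_flatten.mp hx
    obtain ⟨B', hB', hmB'⟩ := mem_flatten.mp hm'
    exact decide_eq_true (hcm.trans (hpw'.2.2 B hB B' hB' x hxB m hmB'))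
  rw [← take_append_drop p Bs, flatten_append, filter_append, hkeep, take_append_drop]
  exact isLeadingMinusBlocks_take hind hpw filter_sublist.subset

lemma IsMinusDecomposition.isLeadingMinusBlocks_take_of_append {A T : List ℤ}
    {Bs : List (List ℤ)} (h : IsMinusDecomposition (A ++ T) Bs) {q : ℕ} {m : ℤ}
    (hmT : m ∉ T) (hm : m ∈ Bs.getD q []) : IsLeadingMinusBlocks A (Bs.take q) := by
  obtain ⟨⟨hfl, -, hpw⟩, hind⟩ := h
  rw [← take_append_drop q Bs, flatten_append] at hfl
  rcases append_eq_append_iff.mp hfl.symm with ⟨R, rfl, hR⟩ | ⟨C, -, rfl⟩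
  · exact isLeadingMinusBlocks_take hind hpw (hR ▸ subset_append_left R T)
  · exact absurd (mem_append_right C (mem_flatten_drop_of_mem_getD hm)) hmT

lemma rtlPos_le_rtlPos_succ {σ : List ℤ} {i : ℕ} (h : i + 1 ≤ rtlCount σ) :
    rtlPos σ i ≤ rtlPos σ (i + 1) := by
  have hsorted : (rtlPositions σ).Pairwise (· ≤ ·) :=
    (pairwise_lt_range.filter _).imp le_of_lt
  unfold rtlPos rtlCount at *
  rw [getD_eq_getElem _ _ (by omega), getD_eq_getElem _ _ (by omega)]
  exact hsorted.rel_get_of_le (a := ⟨i - 1, by omega⟩) (b := ⟨i + 1 - 1, by omega⟩)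
    (Fin.mk_le_mk.mpr (by omega))

lemma isRTLMinPos_rtlPos {σ : List ℤ} {i : ℕ} (h : i - 1 < rtlCount σ) :
    IsRTLMinPos σ (rtlPos σ i) := by
  unfold rtlPos
  rw [getD_eq_getElem _ _ h]
  exact of_decide_eq_true (mem_filter.mp (getElem_mem h)).2

lemma getD_rtlPos_le_succ {σ : List ℤ} {i : ℕ} (h : i + 1 ≤ rtlCount σ) :
    σ.getD (rtlPos σ i) 0 ≤ σ.getD (rtlPos σ (i + 1)) 0 := by
  rcases (rtlPos_le_rtlPos_succ h).eq_or_lt with heq | hlt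
  · rw [heq]
  · exact not_lt.mp <| (isRTLMinPos_rtlPos (by omega)).2 _
      (isRTLMinPos_rtlPos (i := i + 1) (by omega)).1 hlt

lemma commonA_eq_filter_sigmaUp {σ : List ℤ} {i : ℕ} (h : i + 1 ≤ rtlCount σ) :
    commonA σ i = (sigmaUp σ i).filter fun x => decide (σ.getD (rtlPos σ (i + 1)) 0 < x) := by
  unfold commonA sigmaUp
  rw [filter_filter]
  refine filter_congr fun x _ => ?_
  rw [← Bool.decide_and]
  exact decide_eq_decide.mpr (and_iff_left_of_imp (getD_rtlPos_le_succ h).trans_lt).symm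

lemma exists_sigmaUp_succ_eq_commonA_append {σ : List ℤ} (hσ : σ.Nodup) {i : ℕ}
    (h : i + 1 ≤ rtlCount σ) :
    ∃ T, sigmaUp σ (i + 1) = commonA σ i ++ T ∧ (commonA σ i).Disjoint T := by
  set P : ℤ → Bool := fun x => decide (σ.getD (rtlPos σ (i + 1)) 0 < x)
  have htake : σ.take (rtlPos σ (i + 1)) =
      σ.take (rtlPos σ i) ++ (σ.take (rtlPos σ (i + 1))).drop (rtlPos σ i) := by
    have := take_append_drop (rtlPos σ i) (σ.take (rtlPos σ (i + 1)))
    rwa [take_take, min_eq_left (rtlPos_le_rtlPos_succ h), eq_comm] at this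
  refine ⟨((σ.take (rtlPos σ (i + 1))).drop (rtlPos σ i)).filter P, ?_, ?_⟩
  · unfold sigmaUp commonA
    nth_rewrite 1 [htake]
    exact filter_append ..
  · have hnd := htake ▸ (take_sublist _ σ).nodup hσ
    exact disjoint_of_subset_left filter_sublist.subset <|
      disjoint_of_subset_right filter_sublist.subset (disjoint_of_nodup_append hnd)

/-- Blocks are indexed from `0`. -/
theorem blocks_eq_below_min_general (σ : List ℤ) (hσ : σ.Nodup) (i : ℕ)
    (hir : i + 1 ≤ rtlCount σ)
    (Bs Bs' : List (List ℤ))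
    (h1 : IsMinusDecomposition (sigmaUp σ i) Bs)
    (h2 : IsMinusDecomposition (sigmaUp σ (i + 1)) Bs')
    (m : ℤ) (hm : m ∈ commonA σ i)
    (p q : ℕ) (hmp : m ∈ Bs.getD p [])
    (hmq : m ∈ Bs'.getD q []) :
    ∀ j : ℕ, j < min p q → Bs.getD j [] = Bs'.getD j [] := by
  intro j hj
  obtain ⟨T, hsplit, hdisj⟩ := exists_sigmaUp_succ_eq_commonA_append hσ hir
  have hcm : σ.getD (rtlPos σ (i + 1)) 0 < m := of_decide_eq_true (mem_filter.mp hm).2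
  have hlead : IsLeadingMinusBlocks (commonA σ i) (Bs.take p) :=
    commonA_eq_filter_sigmaUp hir ▸ h1.isLeadingMinusBlocks_filter_take hmp hcm
  have hlead' : IsLeadingMinusBlocks (commonA σ i) (Bs'.take q) :=
    (hsplit ▸ h2).isLeadingMinusBlocks_take_of_append (hdisj hm) hmq
  have hp := lt_length_of_mem_getD hmp
  have hq := lt_length_of_mem_getD hmq
  have hblocks := hlead.getD_eq hlead' (i := j)
    (by rw [length_take]; omega) (by rw [length_take]; omega)
  rwa [getD_take_of_lt (by omega), getD_take_of_lt (by omega)] at hblocks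

/-- For any `j < min(p^{(i)}, q^{(i+1)})`, the blocks `B_j^{(i)}` and `B_j^{(i+1)}`
of the `⊖`-decompositions of `σ^{(i)}` and `σ^{(i+1)}` coincide (all indices of
blocks are 0-based here). -/
theorem blocks_eq_below_min (σ : List ℤ) (hσ : σ.Nodup) (i : ℕ)
    (hi : 1 ≤ i) (hir : i + 1 ≤ rtlCount σ)
    (Bs Bs' : List (List ℤ))
    (h1 : IsMinusDecomposition (sigmaUp σ i) Bs)
    (h2 : IsMinusDecomposition (sigmaUp σ (i + 1)) Bs')
    (m : ℤ) (hm : m ∈ commonA σ i) (hmin : ∀ y ∈ commonA σ i, m ≤ y)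
    (p q : ℕ) (hp : p < Bs.length) (hmp : m ∈ Bs.getD p [])
    (hq : q < Bs'.length) (hmq : m ∈ Bs'.getD q []) :
    ∀ j : ℕ, j < min p q → Bs.getD j [] = Bs'.getD j [] :=
  blocks_eq_below_min_general σ hσ i hir Bs Bs' h1 h2 m hm p q hmp hmq
end

section
/- Let σ be a 2-stack sortable permutation, w a sorting word for σ, and σ_ℓ ∈ A^{(i)}. Then every element σ_m with m < ℓ and σ_m > σ_ℓ does not move between times t_i and t_{i+1}: in the decorated word of w, no letter λ_{σ_m} or μ_{σ_m} occurs between the letter ρ_{σ_{k_i}} and the letter ρ_{σ_{k_{i+1}}}. -/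
/-!
Write `x = σ_m`, `z = σ_ℓ` and `B = σ_{k_{i+1}}`, so that `B < z < x`. As the output is
increasing, `μ_B` precedes `μ_z` and `μ_x`, and `μ_B` comes after `ρ_B`; so `μ_x` cannot occur
before `ρ_B`. If `λ_x` occurred between `ρ_{σ_{k_i}}` and `ρ_B`, then `z`, pushed onto `H` after
`x` and before `σ_{k_i}`, would sit above `x` in `H` and hence reach `V` first; since `z` leaves
`V` only after `ρ_B`, it would lie below `x` there, and `x` would be output before `z`,
contradicting `z < x`.

"The letter `p` occurs before `q` in `dw`" is written `[p, q] <+ dw`. The decorated word of a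
sorting process has no repeated letter, which makes this a strict total order on its letters.
-/

open List

namespace List

variable {α : Type*} {l : List α} {a b c : α}

theorem pair_sublist_iff_exists_append :
    [a, b] <+ l ↔ ∃ l₁ l₂, l = l₁ ++ l₂ ∧ a ∈ l₁ ∧ b ∈ l₂ := by
  rw [cons_sublist_iff]
  simp only [singleton_sublist]

theorem pair_sublist_iff : [a, b] <+ l ↔ ∃ l₁ l₂ l₃, l = l₁ ++ a :: l₂ ++ b :: l₃ := by
  constructor
  · intro h
    obtain ⟨r₁, r₂, rfl, ha, hb⟩ := pair_sublist_iff_exists_append.1 h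
    obtain ⟨l₁, l₂, rfl⟩ := append_of_mem ha
    obtain ⟨l₃, l₄, rfl⟩ := append_of_mem hb
    exact ⟨l₁, l₂ ++ l₃, l₄, by simp⟩
  · rintro ⟨l₁, l₂, l₃, rfl⟩
    simp

theorem Nodup.pair_sublist_trans (hl : l.Nodup) (hab : [a, b] <+ l) (hbc : [b, c] <+ l) :
    [a, c] <+ l := by
  obtain ⟨l₁, l₂, rfl, ha, hb⟩ := pair_sublist_iff_exists_append.1 hab
  obtain ⟨m₁, m₂, hm, hb', hc⟩ := pair_sublist_iff_exists_append.1 hbc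
  rcases append_eq_append_iff.1 hm with ⟨r, rfl, rfl⟩ | ⟨r, rfl, rfl⟩
  · exact pair_sublist_iff_exists_append.2 ⟨l₁, r ++ m₂, rfl, ha, mem_append_right r hc⟩
  · exact absurd hb (disjoint_of_nodup_append hl (mem_append_left r hb'))

theorem Nodup.not_pair_sublist_swap (hl : l.Nodup) (hab : [a, b] <+ l) : ¬[b, a] <+ l :=
  fun hba => nodup_iff_sublist.1 hl a (hl.pair_sublist_trans hab hba)

theorem pair_sublist_or_pair_sublist (ha : a ∈ l) (hb : b ∈ l) (hab : a ≠ b) :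
    [a, b] <+ l ∨ [b, a] <+ l := by
  induction l with
  | nil => simp at ha
  | cons x l ih => grind

theorem pair_getD_sublist {d : α} {i j : ℕ} (hij : i < j) (hj : j < l.length) :
    [l.getD i d, l.getD j d] <+ l := by
  refine pair_sublist_iff_exists_append.2
    ⟨l.take j, l.drop j, (take_append_drop j l).symm, ?_, ?_⟩
  · rw [getD_eq_getElem _ _ (hij.trans hj), mem_take_iff_getElem]
    exact ⟨i, by omega, rfl⟩
  · rw [getD_eq_getElem _ _ hj, mem_drop_iff_getElem]
    exact ⟨0, by simp; omega, by simp⟩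

end List

section StackRun

variable {ι α : Type*} [DecidableEq ι]

def StackRun (push pop : ι) : List (ι × α) → List α → List α → Prop
  | [], s, m => m = s
  | (o, x) :: l, s, m =>
    if o = push then StackRun push pop l (x :: s) m
    else if o = pop then ∃ t, s = x :: t ∧ StackRun push pop l t m
    else StackRun push pop l s m

variable {push pop : ι} {l l₁ l₂ : List (ι × α)} {s m : List α} {x y : α}

theorem stackRun_append :
    StackRun push pop (l₁ ++ l₂) s m ↔
      ∃ k, StackRun push pop l₁ s k ∧ StackRun push pop l₂ k m := by
  induction l₁ generalizing s with
  | nil => simp [StackRun]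
  | cons e l₁ ih =>
    obtain ⟨o, x⟩ := e
    simp only [cons_append, StackRun]
    split_ifs <;> grind

theorem stackRun_pop_cons (hne : push ≠ pop) :
    StackRun push pop ((pop, x) :: l) s m ↔ ∃ t, s = x :: t ∧ StackRun push pop l t m := by
  simp [StackRun, hne.symm]

theorem stackRun_push_cons :
    StackRun push pop ((push, x) :: l) s m ↔ StackRun push pop l (x :: s) m := by
  simp [StackRun]

theorem StackRun.mem_or_mem_of_mem (h : StackRun push pop l s m) (hx : x ∈ m) :
    x ∈ s ∨ (push, x) ∈ l := by
  induction l generalizing s with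
  | nil => simp_all [StackRun]
  | cons e l ih =>
    obtain ⟨o, y⟩ := e
    simp only [StackRun] at h
    split_ifs at h <;> grind

theorem StackRun.count_pop_le [DecidableEq α] (h : StackRun push pop l s m) :
    l.count (pop, x) ≤ l.count (push, x) + s.count x := by
  induction l generalizing s with
  | nil => simp
  | cons e l ih =>
    obtain ⟨o, y⟩ := e
    simp only [StackRun] at h
    split_ifs at h <;> grind

theorem StackRun.push_before_pop (hne : push ≠ pop) (h : StackRun push pop l [] m)
    (hx : (pop, x) ∈ l) : [(push, x), (pop, x)] <+ l := by
  obtain ⟨l₁, l₂, rfl⟩ := append_of_mem hx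
  obtain ⟨k, h₁, h₂⟩ := stackRun_append.1 h
  obtain ⟨t, rfl, -⟩ := (stackRun_pop_cons hne).1 h₂
  have hpush := (h₁.mem_or_mem_of_mem mem_cons_self).resolve_left not_mem_nil
  exact pair_sublist_iff_exists_append.2 ⟨l₁, _, rfl, hpush, mem_cons_self⟩

theorem StackRun.exists_eq_append_of_not_mem {u₀ : List α}
    (h : StackRun push pop l (u₀ ++ y :: s) m) (hy : (pop, y) ∉ l) :
    ∃ u, m = u ++ y :: s ∧ ∀ z ∈ u, z ∈ u₀ ∨ (push, z) ∈ l := by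
  induction l generalizing u₀ with
  | nil => exact ⟨u₀, h, fun z hz => Or.inl hz⟩
  | cons e l ih =>
    obtain ⟨o, x⟩ := e
    simp only [StackRun] at h
    split_ifs at h with h₁ h₂
    · obtain ⟨u, rfl, hu⟩ := ih (u₀ := x :: u₀) h (by grind)
      exact ⟨u, rfl, by grind⟩
    · obtain ⟨t, ht, h⟩ := h
      cases u₀ with
      | nil => grind
      | cons a u₀ =>
        obtain ⟨rfl, rfl⟩ := cons_eq_cons.1 ht
        obtain ⟨u, rfl, hu⟩ := ih h (by grind)
        exact ⟨u, rfl, by grind⟩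
    · obtain ⟨u, rfl, hu⟩ := ih h (by grind)
      exact ⟨u, rfl, by grind⟩

theorem StackRun.pop_before_pop (hne : push ≠ pop) (hl : l.Nodup)
    (h : StackRun push pop l s m) (hxy : [(push, x), (push, y)] <+ l)
    (hyx : [(push, y), (pop, x)] <+ l) : [(pop, y), (pop, x)] <+ l := by
  obtain ⟨l₁, l₂, l₃, rfl⟩ := pair_sublist_iff.1 hyx
  have hx : x ≠ y := by
    rintro rfl
    exact nodup_iff_sublist.1 hl _ hxy
  have hx₂ : (push, x) ∉ l₂ := fun hx₂ => hl.not_pair_sublist_swap hxy <|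
    pair_sublist_iff_exists_append.2
      ⟨l₁ ++ [(push, y)], l₂ ++ (pop, x) :: l₃, by simp, by simp, by simp [hx₂]⟩
  -- If `y` stayed in the stack, the top when `x` is popped would be `y` or pushed after `y`.
  by_contra hpop
  have hy₂ : (pop, y) ∉ l₂ := fun hy₂ => hpop <|
    pair_sublist_iff_exists_append.2
      ⟨l₁ ++ (push, y) :: l₂, (pop, x) :: l₃, by simp, by simp [hy₂], by simp⟩
  obtain ⟨k, h₁, h₃⟩ := stackRun_append.1 h
  obtain ⟨k₁, -, h₂⟩ := stackRun_append.1 h₁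
  obtain ⟨t, rfl, -⟩ := (stackRun_pop_cons hne).1 h₃
  obtain ⟨u, hu, hpushed⟩ :=
    (stackRun_push_cons.1 h₂).exists_eq_append_of_not_mem (u₀ := []) hy₂
  cases u with
  | nil => exact hx (cons_eq_cons.1 hu).1
  | cons a u =>
    obtain ⟨rfl, -⟩ := cons_eq_cons.1 hu
    exact hx₂ ((hpushed x mem_cons_self).resolve_left not_mem_nil)

end StackRun

def labels (o : Op) (dw : List (Op × ℤ)) : List ℤ :=
  (dw.filter (·.1 = o)).map Prod.snd

theorem mem_labels {o : Op} {dw : List (Op × ℤ)} {x : ℤ} : x ∈ labels o dw ↔ (o, x) ∈ dw := by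
  simp [labels]

theorem count_labels (o : Op) (dw : List (Op × ℤ)) (x : ℤ) :
    (labels o dw).count x = dw.count (o, x) := by
  induction dw with
  | nil => rfl
  | cons p dw ih => obtain ⟨o', y⟩ := p; by_cases ho : o' = o <;> grind [labels]

theorem pair_sublist_labels_iff {o : Op} {dw : List (Op × ℤ)} {x y : ℤ} :
    [x, y] <+ labels o dw ↔ [(o, x), (o, y)] <+ dw := by
  constructor
  · intro h
    obtain ⟨l', hl', hxy⟩ := sublist_map_iff.1 h
    obtain ⟨⟨o₁, x'⟩, _, rfl, rfl, h₁⟩ := map_eq_cons_iff.1 hxy.symm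
    obtain ⟨⟨o₂, y'⟩, _, rfl, rfl, h₂⟩ := map_eq_cons_iff.1 h₁
    obtain rfl := map_eq_nil_iff.1 h₂
    have ho : ∀ p ∈ [(o₁, x'), (o₂, y')], p.1 = o := fun p hp => by
      simpa using (mem_filter.1 (hl'.subset hp)).2
    obtain ⟨rfl, rfl⟩ : o₁ = o ∧ o₂ = o := by simpa using ho
    exact hl'.trans filter_sublist
  · intro h
    simpa [labels] using (h.filter (·.1 = o)).map Prod.snd

theorem exists_runOps_of_decorate :
    ∀ {w : List Op} {c : Conf} {dw : List (Op × ℤ)}, decorate w c = some dw →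
      ∃ c', runOps w c = some c' ∧ c.input = labels Op.push dw ++ c'.input ∧
        StackRun Op.push Op.lam dw c.H c'.H ∧ StackRun Op.lam Op.mu dw c.V c'.V ∧
        c'.output = c.output ++ labels Op.mu dw
  | [], c, dw, h => by
    obtain rfl : dw = [] := by simpa [decorate] using h.symm
    exact ⟨c, rfl, by simp [labels], rfl, rfl, by simp [labels]⟩
  | Op.push :: w, ⟨x :: inp, H, V, out⟩, dw, h => by
    obtain ⟨dw, hdw, rfl⟩ := Option.map_eq_some_iff.1 h
    obtain ⟨c', hrun, hinp, hH, hV, hout⟩ := exists_runOps_of_decorate hdw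
    exact ⟨c', by simpa [runOps, stepOp] using hrun, by simpa [labels] using hinp,
      by simpa [StackRun] using hH, by simpa [StackRun] using hV,
      by simpa [labels] using hout⟩
  | Op.lam :: w, ⟨inp, x :: H, V, out⟩, dw, h => by
    obtain ⟨dw, hdw, rfl⟩ := Option.map_eq_some_iff.1 h
    obtain ⟨c', hrun, hinp, hH, hV, hout⟩ := exists_runOps_of_decorate hdw
    exact ⟨c', by simpa [runOps, stepOp] using hrun, by simpa [labels] using hinp,
      by simpa [StackRun] using hH, by simpa [StackRun] using hV,
      by simpa [labels] using hout⟩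
  | Op.mu :: w, ⟨inp, H, x :: V, out⟩, dw, h => by
    obtain ⟨dw, hdw, rfl⟩ := Option.map_eq_some_iff.1 h
    obtain ⟨c', hrun, hinp, hH, hV, hout⟩ := exists_runOps_of_decorate hdw
    exact ⟨c', by simpa [runOps, stepOp] using hrun, by simpa [labels] using hinp,
      by simpa [StackRun] using hH, by simpa [StackRun] using hV,
      by simpa [labels] using hout⟩
  | Op.push :: _, ⟨[], _, _, _⟩, _, h | Op.lam :: _, ⟨_, [], _, _⟩, _, h
  | Op.mu :: _, ⟨_, _, [], _⟩, _, h => by simp [decorate] at h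

structure IsSortingRun (σ : List ℤ) (dw : List (Op × ℤ)) : Prop where
  labels_push : labels Op.push dw = σ
  sorted : (labels Op.mu dw).Pairwise (· < ·)
  perm : (labels Op.mu dw).Perm σ
  runH : StackRun Op.push Op.lam dw [] []
  runV : StackRun Op.lam Op.mu dw [] []

theorem SortsTo.isSortingRun {σ : List ℤ} {w : List Op} {dw : List (Op × ℤ)}
    (hw : SortsTo σ w) (hdw : decorate w (initConf σ) = some dw) : IsSortingRun σ dw := by
  obtain ⟨out, hrun, hsort, hperm⟩ := hw
  obtain ⟨c', hrun', hinp, hH, hV, hout⟩ := exists_runOps_of_decorate hdw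
  obtain rfl : c' = ⟨[], [], [], out⟩ := Option.some_injective _ (hrun'.symm.trans hrun)
  simp only [initConf, nil_append, append_nil] at hinp hout
  exact ⟨hinp.symm, hout ▸ hsort, hout ▸ hperm, hH, hV⟩

namespace IsSortingRun

variable {σ : List ℤ} {dw : List (Op × ℤ)} {x y : ℤ}

theorem nodup (h : IsSortingRun σ dw) (hσ : σ.Nodup) : dw.Nodup := by
  have hcount := nodup_iff_count_le_one.1 hσ
  refine nodup_iff_count_le_one.2 fun ⟨o, x⟩ => ?_
  have hpush : dw.count (Op.push, x) ≤ 1 := by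
    rw [← count_labels, h.labels_push]; exact hcount x
  cases o with
  | push => exact hpush
  | lam => simpa using (h.runH.count_pop_le (x := x)).trans hpush
  | mu => rw [← count_labels, h.perm.count_eq]; exact hcount x

theorem mu_mem (h : IsSortingRun σ dw) (hx : x ∈ σ) : (Op.mu, x) ∈ dw :=
  mem_labels.1 (h.perm.mem_iff.2 hx)

theorem lam_before_mu (h : IsSortingRun σ dw) (hx : x ∈ σ) : [(Op.lam, x), (Op.mu, x)] <+ dw :=
  h.runV.push_before_pop (by decide) (h.mu_mem hx)

theorem push_before_lam (h : IsSortingRun σ dw) (hx : x ∈ σ) :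
    [(Op.push, x), (Op.lam, x)] <+ dw :=
  h.runH.push_before_pop (by decide) ((h.lam_before_mu hx).subset mem_cons_self)

theorem push_before_push (h : IsSortingRun σ dw) (hxy : [x, y] <+ σ) :
    [(Op.push, x), (Op.push, y)] <+ dw :=
  pair_sublist_labels_iff.1 (h.labels_push ▸ hxy)

theorem lt_of_mu_before (h : IsSortingRun σ dw) (hxy : [(Op.mu, x), (Op.mu, y)] <+ dw) :
    x < y :=
  pairwise_iff_forall_sublist.1 h.sorted (pair_sublist_labels_iff.2 hxy)

theorem mu_before_mu_of_lt (h : IsSortingRun σ dw) (hx : x ∈ σ) (hy : y ∈ σ) (hxy : x < y) :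
    [(Op.mu, x), (Op.mu, y)] <+ dw :=
  (pair_sublist_or_pair_sublist (h.mu_mem hx) (h.mu_mem hy) (by simp [hxy.ne])).resolve_right
    fun hyx => lt_asymm hxy (h.lt_of_mu_before hyx)

theorem lam_before_lam (h : IsSortingRun σ dw) (hσ : σ.Nodup)
    (hxy : [(Op.push, x), (Op.push, y)] <+ dw) (hyx : [(Op.push, y), (Op.lam, x)] <+ dw) :
    [(Op.lam, y), (Op.lam, x)] <+ dw :=
  h.runH.pop_before_pop (by decide) (h.nodup hσ) hxy hyx

theorem mu_before_mu (h : IsSortingRun σ dw) (hσ : σ.Nodup)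
    (hxy : [(Op.lam, x), (Op.lam, y)] <+ dw) (hyx : [(Op.lam, y), (Op.mu, x)] <+ dw) :
    [(Op.mu, y), (Op.mu, x)] <+ dw :=
  h.runV.pop_before_pop (by decide) (h.nodup hσ) hxy hyx

end IsSortingRun

theorem rtlPos_lt_length {σ : List ℤ} (hσ : σ ≠ []) (i : ℕ) : rtlPos σ i < σ.length := by
  unfold rtlPos
  rcases lt_or_ge (i - 1) (rtlPositions σ).length with hi | hi
  · rw [getD_eq_getElem _ _ hi]
    exact mem_range.1 (mem_filter.1 (getElem_mem hi)).1
  · rw [getD_eq_default _ _ hi]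
    exact length_pos_iff.2 hσ

theorem no_move_between_rtl_pushes_general (σ : List ℤ) (hσ : σ.Nodup)
    (w : List Op) (dw : List (Op × ℤ))
    (hw : SortsTo σ w) (hdw : decorate w (initConf σ) = some dw)
    (i : ℕ)
    (l : ℕ) (hl : l < rtlPos σ i) (hlA : σ.getD (rtlPos σ (i + 1)) 0 < σ.getD l 0)
    (m : ℕ) (hml : m < l) (hvm : σ.getD l 0 < σ.getD m 0) :
    ∀ d1 d2 d3 : List (Op × ℤ),
      dw = d1 ++ (Op.push, σ.getD (rtlPos σ i) 0) :: d2
              ++ (Op.push, σ.getD (rtlPos σ (i + 1)) 0) :: d3 →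
      (Op.lam, σ.getD m 0) ∉ d2 ∧ (Op.mu, σ.getD m 0) ∉ d2 := by
  intro d1 d2 d3 hdec
  set A := σ.getD (rtlPos σ i) 0
  set B := σ.getD (rtlPos σ (i + 1)) 0
  set z := σ.getD l 0
  set x := σ.getD m 0
  have h := hw.isSortingRun hdw
  have hnd := h.nodup hσ
  have hk : rtlPos σ i < σ.length :=
    rtlPos_lt_length (by rintro rfl; simp [rtlPos, rtlPositions] at hl) i
  have hzA := pair_getD_sublist (d := 0) hl hk
  have hB : B ∈ σ := h.labels_push ▸ mem_labels.2 (by simp [hdec])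
  have hB_push_mu := hnd.pair_sublist_trans (h.push_before_lam hB) (h.lam_before_mu hB)
  have hbetween : ∀ p ∈ d2, [(Op.push, A), p] <+ dw ∧ [p, (Op.push, B)] <+ dw := fun p hp =>
    ⟨hdec ▸ by simp [hp], hdec ▸ by grind⟩
  constructor
  · intro hlam
    have hlam_zx : [(Op.lam, z), (Op.lam, x)] <+ dw :=
      h.lam_before_lam hσ (h.push_before_push (pair_getD_sublist hml (by omega)))
        (hnd.pair_sublist_trans (h.push_before_push hzA) (hbetween _ hlam).1)
    have hlam_mu : [(Op.lam, x), (Op.mu, z)] <+ dw :=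
      hnd.pair_sublist_trans (hnd.pair_sublist_trans (hbetween _ hlam).2 hB_push_mu)
        (h.mu_before_mu_of_lt hB (hzA.subset mem_cons_self) hlA)
    exact lt_asymm hvm (h.lt_of_mu_before (h.mu_before_mu hσ hlam_zx hlam_mu))
  · intro hmu
    exact lt_asymm (hlA.trans hvm)
      (h.lt_of_mu_before (hnd.pair_sublist_trans (hbetween _ hmu).2 hB_push_mu))

/-- If `σ_ℓ ∈ A^{(i)}`, then during a sorting process of `σ` every element `σ_m` with
`m < ℓ` and `σ_m > σ_ℓ` does not move between times `t_i` and `t_{i+1}`: in the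
decorated word, no letter `λ_{σ_m}` or `μ_{σ_m}` occurs between `ρ_{σ_{k_i}}` and
`ρ_{σ_{k_{i+1}}}`. -/
theorem no_move_between_rtl_pushes (σ : List ℤ) (hσ : σ.Nodup)
    (w : List Op) (dw : List (Op × ℤ))
    (hw : SortsTo σ w) (hdw : decorate w (initConf σ) = some dw)
    (i : ℕ) (hi : 1 ≤ i) (hir : i + 1 ≤ rtlCount σ)
    (l : ℕ) (hl : l < rtlPos σ i) (hlA : σ.getD (rtlPos σ (i + 1)) 0 < σ.getD l 0)
    (m : ℕ) (hml : m < l) (hvm : σ.getD l 0 < σ.getD m 0) :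
    ∀ d1 d2 d3 : List (Op × ℤ),
      dw = d1 ++ (Op.push, σ.getD (rtlPos σ i) 0) :: d2
              ++ (Op.push, σ.getD (rtlPos σ (i + 1)) 0) :: d3 →
      (Op.lam, σ.getD m 0) ∉ d2 ∧ (Op.mu, σ.getD m 0) ∉ d2 :=
  no_move_between_rtl_pushes_general σ hσ w dw hw hdw i l hl hlA m hml hvm
end
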